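/- arXiv:1406.4782 — 10 statements merged into one kernel-verified Lean document; each statement's English description precedes it below -/
import Mathlib

section
/- Let S be a set with a quasi-order ≤ and a transition relation ⇒ satisfying compatibility. Let pb : S → Set S be a function with pb(q) ⊆ Pred(↑{q}) for every q ∈ S, let F ⊆ S, and define the sequence I₀ = F, I_{n+1} = I_n ∪ ⋃_{q ∈ I_n} pb(q). Then for every n ∈ ℕ and every state s ∈ ↑(I_n) there exists a state t with s ⇒* t and t ∈ ↑F (i.e., s covers a state of ↑F). -/
/-- The upward closure of a set `Y` with respect to a quasi-order `le`. -/
def upcl {S : Type*} (le : S → S → Prop) (Y : Set S) : Set S :=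
  {x : S | ∃ y ∈ Y, le y x}

/-- The set of direct predecessors of a set `I` under the transition relation `step`. -/
def preds {S : Type*} (step : S → S → Prop) (I : Set S) : Set S :=
  {s : S | ∃ s' ∈ I, step s s'}

/-- if `pb q ⊆ Pred(↑{q})` for all `q`, then every state in `↑(I n)`
covers a state of `↑F`. -/
theorem stmt_3 {S : Type*} (le step : S → S → Prop)
    (hrefl : ∀ x, le x x)
    (htrans : ∀ a b c, le a b → le b c → le a c)
    (hcompat : ∀ s₁ t₁ s₂, le s₁ t₁ → step s₁ s₂ →
      ∃ t₂, Relation.ReflTransGen step t₁ t₂ ∧ le s₂ t₂)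
    (pb : S → Set S)
    (hpb : ∀ q : S, pb q ⊆ preds step (upcl le {q}))
    (F : Set S) (I : ℕ → Set S)
    (hI0 : I 0 = F)
    (hIs : ∀ n, I (n + 1) = I n ∪ ⋃ q ∈ I n, pb q) :
    ∀ n : ℕ, ∀ s ∈ upcl le (I n),
      ∃ t, Relation.ReflTransGen step s t ∧ t ∈ upcl le F := by
  intro n
  induction n with
  | zero =>
    intro s hs
    exact ⟨s, Relation.ReflTransGen.refl, hI0 ▸ hs⟩
  | succ n ih =>
    intro s hs
    obtain ⟨q, hq, hqs⟩ := hs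
    rw [hIs n] at hq
    rcases hq with hq | hq
    · exact ih s ⟨q, hq, hqs⟩
    · simp only [Set.mem_iUnion] at hq
      obtain ⟨q', hq', hqpb⟩ := hq
      obtain ⟨q'', hq'', hstep⟩ := hpb q' hqpb
      obtain ⟨y, hy, hle⟩ := hq''
      obtain ⟨t₂, hst, hlet₂⟩ := hcompat q s q'' hqs hstep
      obtain ⟨t, htt, htF⟩ := ih t₂ ⟨q', hq', htrans _ _ _ (hy ▸ hle) hlet₂⟩
      exact ⟨t, hst.trans htt, htF⟩
end

section
/- Let S be a set with a quasi-order ≤ and a transition relation ⇒, let Q ⊆ S, and let pb : S → Set S satisfy Pred(↑{q}) ∩ Q ⊆ ↑(pb(q)) for every q ∈ S. Let F ⊆ S and define I₀ = F, I_{n+1} = I_n ∪ ⋃_{q ∈ I_n} pb(q). Then for every finite sequence of states q₀, q₁, …, q_k with q_i ⇒ q_{i+1} for all 0 ≤ i < k, q_i ∈ Q for all 0 ≤ i ≤ k, and q_k ∈ ↑F, it holds that q₀ ∈ ↑(I_k). -/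
/-- if `Pred(↑{q}) ∩ Q ⊆ ↑(pb q)` for all `q`, then every `Q`-restricted
path of length `k` from `q₀` into `↑F` shows `q₀ ∈ ↑(I k)`. -/
theorem stmt_4 {S : Type*} (le step : S → S → Prop)
    (hrefl : ∀ x, le x x)
    (htrans : ∀ a b c, le a b → le b c → le a c)
    (Q : Set S) (pb : S → Set S)
    (hpb : ∀ q : S, preds step (upcl le {q}) ∩ Q ⊆ upcl le (pb q))
    (F : Set S) (I : ℕ → Set S)
    (hI0 : I 0 = F)
    (hIs : ∀ n, I (n + 1) = I n ∪ ⋃ q ∈ I n, pb q)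
    (k : ℕ) (q : ℕ → S)
    (hstep : ∀ i < k, step (q i) (q (i + 1)))
    (hQ : ∀ i ≤ k, q i ∈ Q)
    (hend : q k ∈ upcl le F) :
    q 0 ∈ upcl le (I k) := by
  induction k generalizing q with
  | zero => rwa [hI0]
  | succ k ih =>
    have h1 : q 1 ∈ upcl le (I k) := by
      apply ih (fun i => q (i + 1))
      · intro i hi; exact hstep (i + 1) (by omega)
      · intro i hi; exact hQ (i + 1) (by omega)
      · exact hend
    obtain ⟨y, hy, hle⟩ := h1
    have h0 : q 0 ∈ upcl le (pb y) := by
      apply hpb y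
      exact ⟨⟨q 1, ⟨y, rfl, hle⟩, hstep 0 (by omega)⟩, hQ 0 (by omega)⟩
    obtain ⟨z, hz, hzle⟩ := h0
    refine ⟨z, ?_, hzle⟩
    rw [hIs k]
    exact Or.inr (Set.mem_biUnion hy hz)
end

section
/- Let S be a set with a quasi-order ≤ and a transition relation ⇒, let Q ⊆ S, and let pb : S → Set S satisfy pb(q) ⊆ Pred(↑{q}) ∩ Q and Pred(↑{q}) ∩ Q ⊆ ↑(pb(q)) for every q ∈ S. Let F ⊆ Q, define I₀ = F, I_{n+1} = I_n ∪ ⋃_{q ∈ I_n} pb(q), and suppose m ∈ ℕ satisfies ↑(I_m) = ↑(I_{m+1}). If a state s satisfies s ∉ ↑(I_m), then there is no finite sequence s = q₀ ⇒ q₁ ⇒ … ⇒ q_k with q_i ∈ Q for all 0 ≤ i ≤ k and q_k ∈ ↑F; that is, s does not cover a state of ↑F within the Q-restricted transition relation. -/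
/-- if the sequence of upward closures is stationary at `m` and
`s ∉ ↑(I m)`, then `s` does not cover a state of `↑F` within `Q`. -/
theorem stmt_5 {S : Type*} (le step : S → S → Prop)
    (hrefl : ∀ x, le x x)
    (htrans : ∀ a b c, le a b → le b c → le a c)
    (Q : Set S) (pb : S → Set S)
    (hpb₁ : ∀ q : S, pb q ⊆ preds step (upcl le {q}) ∩ Q)
    (hpb₂ : ∀ q : S, preds step (upcl le {q}) ∩ Q ⊆ upcl le (pb q))
    (F : Set S) (hF : F ⊆ Q) (I : ℕ → Set S)
    (hI0 : I 0 = F)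
    (hIs : ∀ n, I (n + 1) = I n ∪ ⋃ q ∈ I n, pb q)
    (m : ℕ) (hm : upcl le (I m) = upcl le (I (m + 1)))
    (s : S) (hs : s ∉ upcl le (I m)) :
    ¬ ∃ (k : ℕ) (q : ℕ → S), q 0 = s ∧
        (∀ i < k, step (q i) (q (i + 1))) ∧
        (∀ i ≤ k, q i ∈ Q) ∧
        q k ∈ upcl le F := by
  rintro ⟨k, q, hq0, hstep, hQ, hF'⟩
  -- F ⊆ I m
  have hFIm : ∀ n, F ⊆ I n := by
    intro n
    induction n with
    | zero => rw [hI0]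
    | succ n ih =>
      rw [hIs n]
      exact fun x hx => Or.inl (ih hx)
  -- backwards induction along the path
  have key : ∀ j, j ≤ k → q (k - j) ∈ upcl le (I m) := by
    intro j
    induction j with
    | zero =>
      intro _
      obtain ⟨y, hy, hle⟩ := hF'
      exact ⟨y, hFIm m hy, by simpa using hle⟩
    | succ j ih =>
      intro hjk
      have hj : j ≤ k := by omega
      obtain ⟨y, hy, hle⟩ := ih hj
      have heq : k - (j + 1) + 1 = k - j := by omega
      have hst : step (q (k - (j + 1))) (q (k - j)) := by
        rw [← heq]; exact hstep _ (by omega)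
      have hmem : q (k - (j + 1)) ∈ preds step (upcl le {y}) ∩ Q :=
        ⟨⟨q (k - j), ⟨y, rfl, hle⟩, hst⟩, hQ _ (by omega)⟩
      obtain ⟨z, hz, hlez⟩ := hpb₂ y hmem
      have hzI : z ∈ I (m + 1) := by
        rw [hIs m]
        exact Or.inr (Set.mem_biUnion hy hz)
      rw [hm]
      exact ⟨z, hzI, hlez⟩
  have := key k le_rfl
  simp only [Nat.sub_self, hq0] at this
  exact hs this
end

section
/- Let S be a set with a quasi-order ≤ and a transition relation ⇒ satisfying compatibility. Let pb : S → Set S satisfy pb(q) ⊆ Pred(↑{q}) and Pred(↑{q}) ⊆ ↑(pb(q)) for every q ∈ S. Let F ⊆ S, define I₀ = F, I_{n+1} = I_n ∪ ⋃_{q ∈ I_n} pb(q), and suppose m ∈ ℕ satisfies ↑(I_m) = ↑(I_{m+1}). Then for every state s ∈ S: s covers a state of ↑F (i.e., there exists t with s ⇒* t and t ∈ ↑F) if and only if s ∈ ↑(I_m). -/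
/-- if `pb` is an exact pred-basis, compatibility holds and the sequence of
upward closures is stationary at `m`, then a state covers `↑F` iff it lies in `↑(I m)`. -/
theorem stmt_6 {S : Type*} (le step : S → S → Prop)
    (hrefl : ∀ x, le x x)
    (htrans : ∀ a b c, le a b → le b c → le a c)
    (hcompat : ∀ s₁ t₁ s₂, le s₁ t₁ → step s₁ s₂ →
      ∃ t₂, Relation.ReflTransGen step t₁ t₂ ∧ le s₂ t₂)
    (pb : S → Set S)
    (hpb₁ : ∀ q : S, pb q ⊆ preds step (upcl le {q}))
    (hpb₂ : ∀ q : S, preds step (upcl le {q}) ⊆ upcl le (pb q))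
    (F : Set S) (I : ℕ → Set S)
    (hI0 : I 0 = F)
    (hIs : ∀ n, I (n + 1) = I n ∪ ⋃ q ∈ I n, pb q)
    (m : ℕ) (hm : upcl le (I m) = upcl le (I (m + 1))) :
    ∀ s : S,
      (∃ t, Relation.ReflTransGen step s t ∧ t ∈ upcl le F) ↔ s ∈ upcl le (I m) := by
  -- lifting lemma from compatibility
  have lift : ∀ s t u, le s t → Relation.ReflTransGen step s u →
      ∃ u', Relation.ReflTransGen step t u' ∧ le u u' := by
    intro s t u hst hsu
    induction hsu with
    | refl => exact ⟨t, Relation.ReflTransGen.refl, hst⟩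
    | tail _ hbc ih =>
      obtain ⟨u', htu', hle⟩ := ih
      obtain ⟨t₂, ht₂, hle₂⟩ := hcompat _ u' _ hle hbc
      exact ⟨t₂, htu'.trans ht₂, hle₂⟩
  -- every element of I n covers ↑F
  have covers : ∀ n, ∀ q ∈ I n, ∃ t, Relation.ReflTransGen step q t ∧ t ∈ upcl le F := by
    intro n
    induction n with
    | zero =>
      intro q hq
      exact ⟨q, Relation.ReflTransGen.refl, ⟨q, hI0 ▸ hq, hrefl q⟩⟩
    | succ n ih =>
      intro q hq
      rw [hIs n] at hq
      rcases hq with hq | hq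
      · exact ih q hq
      · simp only [Set.mem_iUnion] at hq
        obtain ⟨p, hp, hqp⟩ := hq
        obtain ⟨s', ⟨p', hp', hps'⟩, hstep⟩ := hpb₁ p hqp
        rcases hp' with rfl
        obtain ⟨t, hpt, htF⟩ := ih p' hp
        obtain ⟨t', hs't', hle'⟩ := lift p' s' t hps' hpt
        obtain ⟨f, hf, hft⟩ := htF
        exact ⟨t', (Relation.ReflTransGen.single hstep).trans hs't',
          ⟨f, hf, htrans _ _ _ hft hle'⟩⟩
  -- I is monotone
  have Imono : ∀ n, I n ⊆ I (n + 1) := by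
    intro n
    rw [hIs n]; exact Set.subset_union_left
  have Imono0 : ∀ n, I 0 ⊆ I n := by
    intro n
    induction n with
    | zero => exact le_refl _
    | succ n ih => exact ih.trans (Imono n)
  -- ↑(I m) is closed under predecessors
  have pclosed : ∀ x y, step x y → y ∈ upcl le (I m) → x ∈ upcl le (I m) := by
    intro x y hxy hy
    obtain ⟨q, hq, hqy⟩ := hy
    have : x ∈ upcl le (pb q) := hpb₂ q ⟨y, ⟨q, rfl, hqy⟩, hxy⟩
    obtain ⟨p, hp, hpx⟩ := this
    have hpI : p ∈ I (m + 1) := by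
      rw [hIs m]
      right
      simp only [Set.mem_iUnion]
      exact ⟨q, hq, hp⟩
    have : x ∈ upcl le (I (m + 1)) := ⟨p, hpI, hpx⟩
    rwa [← hm] at this
  intro s
  constructor
  · rintro ⟨t, hst, htF⟩
    have htm : t ∈ upcl le (I m) := by
      obtain ⟨f, hf, hft⟩ := htF
      exact ⟨f, Imono0 m (hI0 ▸ hf : f ∈ I 0), hft⟩
    clear htF
    induction hst using Relation.ReflTransGen.head_induction_on with
    | refl => exact htm
    | head hab _ ih => exact pclosed _ _ hab ih
  · rintro ⟨q, hq, hqs⟩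
    obtain ⟨t, hqt, htF⟩ := covers m q hq
    obtain ⟨t', hst', hle'⟩ := lift q s t hqs hqt
    obtain ⟨f, hf, hft⟩ := htF
    exact ⟨t', hst', ⟨f, hf, htrans _ _ _ hft hle'⟩⟩
end

section
/- Let S be a set with a quasi-order ≤ that is a well-quasi-order on all of S, and let ⇒ be a transition relation on S satisfying compatibility. Let pb : S → Set S satisfy pb(q) ⊆ Pred(↑{q}) and Pred(↑{q}) ⊆ ↑(pb(q)) for every q ∈ S. Let F ⊆ S and define I₀ = F, I_{n+1} = I_n ∪ ⋃_{q ∈ I_n} pb(q). Then there exists m ∈ ℕ such that ↑(I_n) = ↑(I_m) for all n ≥ m, and for this m and every state s ∈ S: there exists t with s ⇒* t and t ∈ ↑F if and only if s ∈ ↑(I_m). -/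
/-- for a WSTS (wqo on all of `S`) with an exact pred-basis `pb`, the backward
iteration becomes stationary at some `m`, and coverability of `↑F` holds iff `s ∈ ↑(I m)`. -/
theorem stmt_7 {S : Type*} (le step : S → S → Prop)
    (hrefl : ∀ x, le x x)
    (htrans : ∀ a b c, le a b → le b c → le a c)
    (hwqo : ∀ f : ℕ → S, ∃ i j : ℕ, i < j ∧ le (f i) (f j))
    (hcompat : ∀ s₁ t₁ s₂, le s₁ t₁ → step s₁ s₂ →
      ∃ t₂, Relation.ReflTransGen step t₁ t₂ ∧ le s₂ t₂)
    (pb : S → Set S)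
    (hpb₁ : ∀ q : S, pb q ⊆ preds step (upcl le {q}))
    (hpb₂ : ∀ q : S, preds step (upcl le {q}) ⊆ upcl le (pb q))
    (F : Set S) (I : ℕ → Set S)
    (hI0 : I 0 = F)
    (hIs : ∀ n, I (n + 1) = I n ∪ ⋃ q ∈ I n, pb q) :
    ∃ m : ℕ, (∀ n ≥ m, upcl le (I n) = upcl le (I m)) ∧
      ∀ s : S,
        (∃ t, Relation.ReflTransGen step s t ∧ t ∈ upcl le F) ↔ s ∈ upcl le (I m) := by
  classical
  -- upward closure is upward closed
  have hup : ∀ (Y : Set S) (x z : S), x ∈ upcl le Y → le x z → z ∈ upcl le Y := by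
    rintro Y x z ⟨y, hy, hyx⟩ hxz
    exact ⟨y, hy, htrans _ _ _ hyx hxz⟩
  -- I is monotone
  have hImono : Monotone I := by
    apply monotone_nat_of_le_succ
    intro n x hx
    rw [hIs n]; exact Or.inl hx
  have hupmono : ∀ (Y Z : Set S), Y ⊆ Z → upcl le Y ⊆ upcl le Z := by
    rintro Y Z hYZ x ⟨y, hy, hle⟩
    exact ⟨y, hYZ hy, hle⟩
  -- compatibility lifted to reflexive-transitive closure
  have hlift : ∀ s t, Relation.ReflTransGen step s t → ∀ u, le s u →
      ∃ v, Relation.ReflTransGen step u v ∧ le t v := by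
    intro s t h
    induction h using Relation.ReflTransGen.head_induction_on with
    | refl => intro u hu; exact ⟨u, .refl, hu⟩
    | head hab _ ih =>
      intro u hu
      obtain ⟨u', hu', hle'⟩ := hcompat _ _ _ hu hab
      obtain ⟨v, hv, hlev⟩ := ih u' hle'
      exact ⟨v, hu'.trans hv, hlev⟩
  -- every element of I n covers F
  have hcov : ∀ n, ∀ x ∈ I n, ∃ t, Relation.ReflTransGen step x t ∧ t ∈ upcl le F := by
    intro n
    induction n with
    | zero =>
      intro x hx
      rw [hI0] at hx
      exact ⟨x, .refl, ⟨x, hx, hrefl x⟩⟩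
    | succ n ih =>
      intro x hx
      rw [hIs n] at hx
      rcases hx with hx | hx
      · exact ih x hx
      · rw [Set.mem_iUnion₂] at hx
        obtain ⟨q, hq, hxq⟩ := hx
        obtain ⟨s', hs', hstep⟩ := hpb₁ q hxq
        obtain ⟨y, hy, hle⟩ := hs'
        rw [Set.mem_singleton_iff] at hy; rw [hy] at hle
        obtain ⟨t, ht, htF⟩ := ih q hq
        obtain ⟨v, hv, hlev⟩ := hlift q t ht s' hle
        exact ⟨v, Relation.ReflTransGen.head hstep hv, hup F t v htF hlev⟩
  -- stabilization propagates
  have hprop : ∀ n, upcl le (I (n + 1)) ⊆ upcl le (I n) →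
      upcl le (I (n + 2)) ⊆ upcl le (I (n + 1)) := by
    intro n h x hx
    obtain ⟨y, hy, hle⟩ := hx
    rw [hIs (n + 1)] at hy
    rcases hy with hy | hy
    · exact ⟨y, hy, hle⟩
    · rw [Set.mem_iUnion₂] at hy
      obtain ⟨q, hq, hypb⟩ := hy
      obtain ⟨r, hr, hrq⟩ := h ⟨q, hq, hrefl q⟩
      obtain ⟨s', hs', hstep⟩ := hpb₁ q hypb
      obtain ⟨y', hy', hley'⟩ := hs'
      rw [Set.mem_singleton_iff] at hy'; rw [hy'] at hley'
      have hmem : y ∈ preds step (upcl le {r}) :=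
        ⟨s', ⟨r, rfl, htrans _ _ _ hrq hley'⟩, hstep⟩
      obtain ⟨z, hz, hlez⟩ := hpb₂ r hmem
      have hzI : z ∈ I (n + 1) := by
        rw [hIs n]; right; exact Set.mem_iUnion₂.mpr ⟨r, hr, hz⟩
      exact ⟨z, hzI, htrans _ _ _ hlez hle⟩
  -- there is a stabilization point
  have hex : ∃ m, upcl le (I (m + 1)) ⊆ upcl le (I m) := by
    by_contra hc
    push_neg at hc
    have hch : ∀ m, ∃ y, y ∈ I (m + 1) ∧ y ∉ upcl le (I m) := by
      intro m
      obtain ⟨x, hx, hnx⟩ := Set.not_subset.mp (hc m)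
      obtain ⟨y, hy, hle⟩ := hx
      exact ⟨y, hy, fun h => hnx (hup _ _ _ h hle)⟩
    choose y hy1 hy2 using hch
    obtain ⟨i, j, hij, hle⟩ := hwqo y
    exact hy2 j ⟨y i, hImono (Nat.succ_le_of_lt hij) (hy1 i), hle⟩
  obtain ⟨m, hm⟩ := hex
  have hsub : ∀ k, upcl le (I (m + k + 1)) ⊆ upcl le (I (m + k)) := by
    intro k
    induction k with
    | zero => exact hm
    | succ k ih => exact hprop (m + k) ih
  have heq : ∀ k, upcl le (I (m + k)) = upcl le (I m) := by
    intro k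
    induction k with
    | zero => rfl
    | succ k ih =>
      refine Set.Subset.antisymm ?_ ?_
      · exact (hsub k).trans ih.subset
      · exact ih.symm.subset.trans (hupmono _ _ (hImono (Nat.le_succ _)))
  refine ⟨m, ?_, ?_⟩
  · intro n hn
    obtain ⟨k, rfl⟩ := Nat.exists_eq_add_of_le hn
    exact heq k
  · intro s
    constructor
    · rintro ⟨t, hst, htF⟩
      induction hst using Relation.ReflTransGen.head_induction_on with
      | refl =>
        obtain ⟨y, hy, hle⟩ := htF
        exact ⟨y, hImono (Nat.zero_le m) (hI0 ▸ hy), hle⟩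
      | @head a b hab _ ih =>
        obtain ⟨q, hq, hle⟩ := ih
        have hmem : a ∈ preds step (upcl le {q}) := ⟨b, ⟨q, rfl, hle⟩, hab⟩
        obtain ⟨z, hz, hlez⟩ := hpb₂ q hmem
        have hzI : z ∈ I (m + 1) := by
          rw [hIs m]; right; exact Set.mem_iUnion₂.mpr ⟨q, hq, hz⟩
        exact hsub 0 ⟨z, hzI, hlez⟩
    · rintro ⟨x, hx, hlex⟩
      obtain ⟨t, ht, htF⟩ := hcov m x hx
      obtain ⟨v, hv, hlev⟩ := hlift x t ht s hlex
      exact ⟨v, hv, hup F t v htF hlev⟩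
end

section
/- Let Λ be a finite set of edge labels and k ∈ ℕ. Consider any infinite sequence G₀, G₁, G₂, … of finite directed edge-labelled multigraphs over Λ (say G_i has vertex set Fin(n_i) and edge-count function E_i : Fin(n_i) → Fin(n_i) → Λ → ℕ) such that in every G_i every undirected path has length at most k. Then there exist indices i < j such that G_i is a subgraph of G_j, i.e., there is an injective map f : Fin(n_i) → Fin(n_j) with E_i(u, v, λ) ≤ E_j(f(u), f(v), λ) for all vertices u, v and all λ ∈ Λ. -/
/-
Let every path of a graph have at most `k` edges. Growing a tree from a root and handing each
component of the remaining vertices to a neighbour of the root, recursively, gives a spanning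
forest of height at most `k + 1` in which every edge of the graph joins an ancestor to a
descendant. Label each vertex by the multiplicities of its loops and of its edges to and from
each of its at most `k` ancestors: these labels are well-quasi-ordered (Dickson), hence so are
forests of height `k + 1` under depth-preserving embeddings (Higman's lemma, applied once per
level). An embedding of the labelled forests of `Gᵢ` into those of `Gⱼ` is injective on
vertices; it preserves the edges to ancestors because of the labels, and all other pairs of
vertices of `Gᵢ` carry no edges.
-/

/-- The underlying simple graph of a finite directed edge-labelled multigraph
given by its edge-count function `E`: two distinct vertices are adjacent iff some
labelled edge connects them in either direction. -/
def underlying {Λ : Type*} {n : ℕ} (E : Fin n → Fin n → Λ → ℕ) : SimpleGraph (Fin n) where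
  Adj u v := u ≠ v ∧ ∃ l : Λ, 0 < E u v l ∨ 0 < E v u l
  symm := by
    constructor
    rintro u v ⟨h, l, hl⟩
    exact ⟨h.symm, l, hl.symm⟩
  loopless := by
    constructor
    rintro v ⟨h, -⟩
    exact h rfl

theorem WellQuasiOrdered.sublistForall₂ {α : Type*} {r : α → α → Prop} [IsPreorder α r]
    (hr : WellQuasiOrdered r) : WellQuasiOrdered (List.SublistForall₂ r) := fun f =>
  Set.PartiallyWellOrderedOn.partiallyWellOrderedOn_sublistForall₂ r
    (Set.partiallyWellOrderedOn_univ_iff.2 hr) fun n => ⟨f n, fun _ _ => trivial⟩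

universe u

def HTree (α : Type u) : ℕ → Type u
  | 0 => PEmpty
  | h + 1 => α × List (HTree α h)

namespace HTree

variable {α : Type*}

def node {h : ℕ} (x : α) (cs : List (HTree α h)) : HTree α (h + 1) := (x, cs)

def toList : ∀ {h}, HTree α h → List α
  | 0, t => t.elim
  | _ + 1, t => t.1 :: t.2.flatMap toList

theorem toList_node {h : ℕ} (x : α) (cs : List (HTree α h)) :
    (node x cs).toList = x :: cs.flatMap toList :=
  rfl

def Embeds (r : α → α → Prop) : ∀ {h}, HTree α h → HTree α h → Prop
  | 0, t, _ => t.elim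
  | _ + 1, t, t' => r t.1 t'.1 ∧ List.SublistForall₂ (Embeds r) t.2 t'.2

instance isPreorder_embeds (r : α → α → Prop) [IsPreorder α r] :
    ∀ h, IsPreorder (HTree α h) (Embeds r (h := h))
  | 0 => { refl := fun t => t.elim, trans := fun t => t.elim }
  | h + 1 =>
    have := isPreorder_embeds r h
    { refl := fun _ => ⟨refl _, refl _⟩
      trans := fun _ _ _ h₁ h₂ => ⟨_root_.trans h₁.1 h₂.1, _root_.trans h₁.2 h₂.2⟩ }

theorem wellQuasiOrdered_embeds {r : α → α → Prop} [IsPreorder α r]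
    (hr : WellQuasiOrdered r) : ∀ h, WellQuasiOrdered (Embeds r (h := h))
  | 0 => fun f => (f 0).elim
  | h + 1 => hr.prod (wellQuasiOrdered_embeds hr h).sublistForall₂

end HTree

namespace SimpleGraph

variable {V : Type*} (G : SimpleGraph V)

def ReachIn (s : Finset V) : V → V → Prop :=
  Relation.ReflTransGen fun a b => G.Adj a b ∧ a ∈ s ∧ b ∈ s

noncomputable def componentIn (s : Finset V) (c : V) : Finset V :=
  open Classical in s.filter (G.ReachIn s c)

def Apart (A B : List V) : Prop := ∀ x ∈ A, ∀ y ∈ B, Gᶜ.Adj x y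

/-- Every edge of `G` between vertices of the forest joins an ancestor to a descendant. -/
def IsNormalForest : ∀ {h}, List (HTree V h) → Prop
  | 0, _ => True
  | _ + 1, F =>
    (∀ t ∈ F, IsNormalForest t.2) ∧ F.Pairwise fun t t' => G.Apart t.toList t'.toList

variable {G} {s : Finset V} {c x : V}

theorem ReachIn.mem_left (h : G.ReachIn s c x) (hx : x ∈ s) : c ∈ s := by
  obtain rfl | ⟨_, hstep, -⟩ := h.cases_head
  exacts [hx, hstep.2.1]

theorem mem_componentIn : x ∈ G.componentIn s c ↔ x ∈ s ∧ G.ReachIn s c x := by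
  classical
  simp [componentIn]

theorem componentIn_subset : G.componentIn s c ⊆ s := fun _ hx => (mem_componentIn.1 hx).1

theorem self_mem_componentIn (hc : c ∈ s) : c ∈ G.componentIn s c :=
  mem_componentIn.2 ⟨hc, .refl⟩

theorem mem_componentIn_of_adj {y : V} (hx : x ∈ G.componentIn s c) (hy : y ∈ s)
    (hxy : G.Adj x y) : y ∈ G.componentIn s c :=
  mem_componentIn.2 ⟨hy, (mem_componentIn.1 hx).2.tail ⟨hxy, (mem_componentIn.1 hx).1, hy⟩⟩

theorem compl_adj_of_mem_componentIn [DecidableEq V] {y : V} (hx : x ∈ G.componentIn s c)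
    (hy : y ∈ s \ G.componentIn s c) : Gᶜ.Adj x y := by
  rw [Finset.mem_sdiff] at hy
  exact (G.compl_adj x y).2
    ⟨fun h => hy.2 (h ▸ hx), fun h => hy.2 (mem_componentIn_of_adj hx hy.1 h)⟩

theorem ReachIn.componentIn (h : G.ReachIn s c x) : G.ReachIn (G.componentIn s c) c x := by
  induction h with
  | refl => exact .refl
  | @tail y z hcy hyz ih =>
    exact ih.tail ⟨hyz.1, mem_componentIn.2 ⟨hyz.2.1, hcy⟩,
      mem_componentIn.2 ⟨hyz.2.2, hcy.tail hyz⟩⟩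

theorem ReachIn.sdiff_componentIn [DecidableEq V] {c' : V} (h : G.ReachIn s c x)
    (hx : x ∉ G.componentIn s c') :
    G.ReachIn (s \ G.componentIn s c') c x := by
  induction h with
  | refl => exact .refl
  | @tail y z _ hyz ih =>
    have hy : y ∉ G.componentIn s c' := fun hy => hx (mem_componentIn_of_adj hy hyz.2.2 hyz.1)
    exact (ih hy).tail
      ⟨hyz.1, Finset.mem_sdiff.2 ⟨hyz.2.1, hy⟩, Finset.mem_sdiff.2 ⟨hyz.2.2, hx⟩⟩

theorem ReachIn.exists_adj_reachIn_erase [DecidableEq V] (h : G.ReachIn s c x) (hxc : x ≠ c) :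
    ∃ d, G.Adj c d ∧ G.ReachIn (s.erase c) d x := by
  induction h with
  | refl => exact absurd rfl hxc
  | @tail y z _ hyz ih =>
    by_cases hyc : y = c
    · exact ⟨z, hyc ▸ hyz.1, .refl⟩
    · obtain ⟨d, hcd, hdy⟩ := ih hyc
      exact ⟨d, hcd, hdy.tail ⟨hyz.1, Finset.mem_erase.2 ⟨hyc, hyz.2.1⟩,
        Finset.mem_erase.2 ⟨hxc, hyz.2.2⟩⟩⟩

theorem isNormalForest_node_cons [DecidableEq V] {h : ℕ} {cs : List (HTree V h)}
    {F : List (HTree V (h + 1))} (hc : c ∈ s) (hcs : G.IsNormalForest cs)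
    (hcs_vert : (cs.flatMap HTree.toList : Multiset V) = ((G.componentIn s c).erase c).val)
    (hF : G.IsNormalForest F)
    (hF_vert : (F.flatMap HTree.toList : Multiset V) = (s \ G.componentIn s c).val) :
    G.IsNormalForest (HTree.node c cs :: F) ∧
      ((HTree.node c cs :: F).flatMap HTree.toList : Multiset V) = s.val := by
  have hC_vert : ((HTree.node c cs).toList : Multiset V) = (G.componentIn s c).val := by
    rw [HTree.toList_node, ← Multiset.cons_coe, hcs_vert, Finset.erase_val,
      Multiset.cons_erase (self_mem_componentIn hc)]
  refine ⟨⟨?_, List.pairwise_cons.2 ⟨fun t ht x hx y hy => ?_, hF.2⟩⟩, ?_⟩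
  · rintro t (_ | ⟨_, ht⟩)
    exacts [hcs, hF.1 t ht]
  · refine compl_adj_of_mem_componentIn (by rwa [← Finset.mem_val, ← hC_vert]) ?_
    rw [← Finset.mem_val, ← hF_vert, Multiset.mem_coe]
    exact List.mem_flatMap.2 ⟨t, ht, hy⟩
  · rw [List.flatMap_cons, ← Multiset.coe_add, hC_vert, hF_vert, Finset.sdiff_val,
      add_tsub_cancel_of_le (Finset.val_le_iff.2 componentIn_subset)]

theorem exists_normalForest [DecidableEq V] (s : Finset V) (h : ℕ) (root : V → Prop)
    (hroot : ∀ x ∈ s, ∃ c, root c ∧ G.ReachIn s c x)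
    (hpath : ∀ c ∈ s, root c → ∀ x (p : G.Walk c x), p.IsPath →
      (∀ v ∈ p.support, v ∈ s) → p.length < h) :
    ∃ F : List (HTree V h), G.IsNormalForest F ∧
      (F.flatMap HTree.toList : Multiset V) = s.val := by
  induction s using Finset.strongInduction generalizing h root with
  | H s ih =>
  obtain rfl | ⟨x₀, hx₀⟩ := s.eq_empty_or_nonempty
  · exact ⟨[], by cases h <;> simp [IsNormalForest], rfl⟩
  obtain ⟨c, hc_root, hc_reach⟩ := hroot x₀ hx₀
  have hc : c ∈ s := hc_reach.mem_left hx₀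
  obtain ⟨h, rfl⟩ : ∃ h', h = h' + 1 :=
    Nat.exists_eq_add_one.2 (hpath c hc hc_root c .nil .nil (by simpa using hc))
  set C := G.componentIn s c
  have hcC : c ∈ C := self_mem_componentIn hc
  -- The subtrees of `c` are rooted at neighbours of `c`, so their paths extend through `c`.
  obtain ⟨cs, hcs, hcs_vert⟩ := ih (C.erase c)
    ((Finset.erase_ssubset hcC).trans_le componentIn_subset) h (G.Adj c)
    (fun x hx => ((mem_componentIn.1 (Finset.mem_of_mem_erase hx)).2.componentIn
      |>.exists_adj_reachIn_erase (Finset.ne_of_mem_erase hx)))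
    (fun d _ hcd x p hp hps => by
      have := hpath c hc hc_root x (.cons hcd p) (hp.cons fun hcp => by simpa using hps c hcp)
        (by simpa using
          ⟨hc, fun v hv => componentIn_subset (Finset.mem_of_mem_erase (hps v hv))⟩)
      simpa using this)
  obtain ⟨F, hF, hF_vert⟩ := ih (s \ C) (Finset.sdiff_ssubset componentIn_subset ⟨c, hcC⟩)
    (h + 1) root
    (fun x hx => by
      obtain ⟨c', hc', hreach⟩ := hroot x (Finset.mem_sdiff.1 hx).1
      exact ⟨c', hc', hreach.sdiff_componentIn (Finset.mem_sdiff.1 hx).2⟩)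
    (fun c' hc' hroot' x p hp hps => hpath c' (Finset.mem_sdiff.1 hc').1 hroot' x p hp
      fun v hv => (Finset.mem_sdiff.1 (hps v hv)).1)
  exact ⟨_, isNormalForest_node_cons hc hcs hcs_vert hF hF_vert⟩

theorem exists_normalForest_of_path_length_le [Fintype V] [DecidableEq V] {k : ℕ}
    (hpath : ∀ u v (p : G.Walk u v), p.IsPath → p.length ≤ k) :
    ∃ F : List (HTree V (k + 1)), G.IsNormalForest F ∧
      (F.flatMap HTree.toList).Nodup ∧ ∀ x, x ∈ F.flatMap HTree.toList := by
  obtain ⟨F, hF_normal, hF_vert⟩ := G.exists_normalForest Finset.univ (k + 1) (fun _ => True)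
    (fun x _ => ⟨x, trivial, .refl⟩) fun c _ _ x p hp _ => Nat.lt_succ_of_le (hpath c x p hp)
  refine ⟨F, hF_normal, ?_, fun x => ?_⟩
  · rw [← Multiset.coe_nodup, hF_vert]
    exact Finset.univ.nodup
  · rw [← Multiset.mem_coe, hF_vert]
    exact Finset.mem_univ x

end SimpleGraph

namespace Multigraph

variable {Λ V : Type*}

abbrev Profile (Λ : Type*) (k : ℕ) : Type _ := Option (Fin k) × Λ × Bool → ℕ

/-- Entry `(some p, l, b)` counts the `l`-labelled edges between `x` and its ancestor `p + 1`
levels up (`anc[p]`), towards `x` iff `b`; entry `(none, l, _)` counts the `l`-labelled loops. -/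
def profile (E : V → V → Λ → ℕ) (k : ℕ) (anc : List V) (x : V) : Profile Λ k
  | (none, l, _) => E x x l
  | (some p, l, false) => (anc[(p : ℕ)]?).elim 0 (E x · l)
  | (some p, l, true) => (anc[(p : ℕ)]?).elim 0 (E · x l)

def profileTree (E : V → V → Λ → ℕ) (k : ℕ) :
    ∀ {h}, List V → HTree V h → HTree (Profile Λ k) h
  | 0, _, t => t.elim
  | _ + 1, anc, t => HTree.node (profile E k anc t.1) (t.2.map (profileTree E k (t.1 :: anc)))

def NoEdgesBetween (E : V → V → Λ → ℕ) (A B : List V) : Prop :=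
  ∀ x ∈ A, ∀ y ∈ B, ∀ l, E x y l = 0 ∧ E y x l = 0

theorem noEdgesBetween_of_apart {n : ℕ} {E : Fin n → Fin n → Λ → ℕ} {A B : List (Fin n)}
    (h : (underlying E).Apart A B) : NoEdgesBetween E A B := by
  intro x hx y hy l
  have hxy := h x hx y hy
  simp only [SimpleGraph.compl_adj, underlying, not_and, not_exists, not_or, not_lt,
    nonpos_iff_eq_zero] at hxy
  exact hxy.2 hxy.1 l

variable {V₁ V₂ : Type*} (E₁ : V₁ → V₁ → Λ → ℕ) (E₂ : V₂ → V₂ → Λ → ℕ)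

def EdgeLE (q q' : V₁ × V₂) : Prop := ∀ l, E₁ q.1 q'.1 l ≤ E₂ q.2 q'.2 l

/-- `L₁` is matched, in order, to a subsequence of `L₂` so that no edge multiplicity decreases
among the matched vertices, nor between them and the matched ancestors `anc`. -/
def Pairing (anc : List (V₁ × V₂)) (L₁ : List V₁) (L₂ : List V₂) : Prop :=
  ∃ π : List (V₁ × V₂), π.map Prod.fst = L₁ ∧ (π.map Prod.snd).Sublist L₂ ∧
    ∀ q ∈ π, ∀ q' ∈ π ++ anc, EdgeLE E₁ E₂ q q' ∧ EdgeLE E₁ E₂ q' q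

variable {E₁ E₂}

theorem edgeLE_of_profile_le {k : ℕ} {anc : List (V₁ × V₂)} {x : V₁} {x' : V₂}
    (hk : anc.length ≤ k)
    (hle : profile E₁ k (anc.map Prod.fst) x ≤ profile E₂ k (anc.map Prod.snd) x') :
    EdgeLE E₁ E₂ (x, x') (x, x') ∧
      ∀ a ∈ anc, EdgeLE E₁ E₂ (x, x') a ∧ EdgeLE E₁ E₂ a (x, x') := by
  refine ⟨fun l => hle (none, l, false), fun a ha => ?_⟩
  obtain ⟨p, hp, rfl⟩ := List.getElem_of_mem ha
  have hpk : p < k := hp.trans_le hk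
  refine ⟨fun l => ?_, fun l => ?_⟩
  · simpa [profile, hp] using hle (some ⟨p, hpk⟩, l, false)
  · simpa [profile, hp] using hle (some ⟨p, hpk⟩, l, true)

namespace Pairing

variable {anc : List (V₁ × V₂)} {L₁ L₁' : List V₁} {L₂ L₂' : List V₂}

theorem nil : Pairing E₁ E₂ anc [] L₂ := ⟨[], rfl, List.nil_sublist _, by simp⟩

theorem mono_right (h : Pairing E₁ E₂ anc L₁ L₂) (hL : L₂.Sublist L₂') :
    Pairing E₁ E₂ anc L₁ L₂' :=
  let ⟨π, h₁, h₂, h₃⟩ := h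
  ⟨π, h₁, h₂.trans hL, h₃⟩

theorem append (h : Pairing E₁ E₂ anc L₁ L₂) (h' : Pairing E₁ E₂ anc L₁' L₂')
    (hzero : NoEdgesBetween E₁ L₁ L₁') :
    Pairing E₁ E₂ anc (L₁ ++ L₁') (L₂ ++ L₂') := by
  obtain ⟨π, rfl, hπ_sub, hπ⟩ := h
  obtain ⟨π', rfl, hπ'_sub, hπ'⟩ := h'
  have cross : ∀ q ∈ π, ∀ q' ∈ π', EdgeLE E₁ E₂ q q' ∧ EdgeLE E₁ E₂ q' q :=
    fun q hq q' hq' => have hz := hzero q.1 (List.mem_map_of_mem hq) q'.1 (List.mem_map_of_mem hq')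
      ⟨fun l => (hz l).1 ▸ Nat.zero_le _, fun l => (hz l).2 ▸ Nat.zero_le _⟩
  refine ⟨π ++ π', by simp, by simpa using hπ_sub.append hπ'_sub, fun q hq q' hq' => ?_⟩
  simp only [List.mem_append] at hq hq'
  rcases hq with hq | hq <;> rcases hq' with (hq' | hq') | hq'
  · exact hπ q hq q' (List.mem_append_left _ hq')
  · exact cross q hq q' hq'
  · exact hπ q hq q' (List.mem_append_right _ hq')
  · exact (cross q' hq' q hq).symm
  · exact hπ' q hq q' (List.mem_append_left _ hq')
  · exact hπ' q hq q' (List.mem_append_right _ hq')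

theorem cons {x : V₁} {x' : V₂} (h : Pairing E₁ E₂ ((x, x') :: anc) L₁ L₂)
    (hloop : EdgeLE E₁ E₂ (x, x') (x, x'))
    (hanc : ∀ a ∈ anc, EdgeLE E₁ E₂ (x, x') a ∧ EdgeLE E₁ E₂ a (x, x')) :
    Pairing E₁ E₂ anc (x :: L₁) (x' :: L₂) := by
  obtain ⟨π, rfl, hπ_sub, hπ⟩ := h
  refine ⟨(x, x') :: π, rfl, hπ_sub.cons_cons _, ?_⟩
  rintro q (_ | ⟨_, hq⟩) q' hq'
  · simp only [List.cons_append, List.mem_cons, List.mem_append] at hq'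
    rcases hq' with rfl | hq' | hq'
    · exact ⟨hloop, hloop⟩
    · exact (hπ q' hq' (x, x') (by simp)).symm
    · exact hanc q' hq'
  · refine hπ q hq q' ?_
    simp only [List.cons_append, List.mem_cons, List.mem_append] at hq' ⊢
    tauto

theorem flatMap_of_sublistForall₂ {ι₁ ι₂ : Type*} {R : ι₁ → ι₂ → Prop} {f₁ : ι₁ → List V₁}
    {f₂ : ι₂ → List V₂} {cs : List ι₁} {ds : List ι₂} (hsub : List.SublistForall₂ R cs ds)
    (hR : ∀ c ∈ cs, ∀ d, R c d → Pairing E₁ E₂ anc (f₁ c) (f₂ d))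
    (hzero : cs.Pairwise fun c c' => NoEdgesBetween E₁ (f₁ c) (f₁ c')) :
    Pairing E₁ E₂ anc (cs.flatMap f₁) (ds.flatMap f₂) := by
  induction hsub with
  | nil => exact nil
  | cons hcd _ ih =>
    rw [List.pairwise_cons] at hzero
    refine (hR _ List.mem_cons_self _ hcd).append
      (ih (fun c hc => hR c (List.mem_cons_of_mem _ hc)) hzero.2) fun x hx y hy => ?_
    obtain ⟨c', hc', hy⟩ := List.mem_flatMap.1 hy
    exact hzero.1 c' hc' x hx y hy
  | cons_right _ ih => exact (ih hR hzero).mono_right (List.sublist_append_right _ _)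

theorem exists_injective (h : Pairing E₁ E₂ [] L₁ L₂) (hL₁ : ∀ x, x ∈ L₁)
    (hL₂ : L₂.Nodup) :
    ∃ f : V₁ → V₂, Function.Injective f ∧ ∀ u v l, E₁ u v l ≤ E₂ (f u) (f v) l := by
  obtain ⟨π, rfl, hπ_sub, hπ⟩ := h
  choose g hg hgu using fun u => List.mem_map.1 (hL₁ u)
  refine ⟨fun u => (g u).2, fun u v huv => ?_, fun u v l => ?_⟩
  · rw [← hgu u, ← hgu v, List.inj_on_of_nodup_map (hL₂.sublist hπ_sub) (hg u) (hg v) huv]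
  · simpa [hgu] using (hπ (g u) (hg u) (g v) (by simpa using hg v)).1 l

end Pairing

theorem pairing_of_sublistForall₂_profileTree {m₁ m₂ k : ℕ}
    {E₁ : Fin m₁ → Fin m₁ → Λ → ℕ} {E₂ : Fin m₂ → Fin m₂ → Λ → ℕ} :
    ∀ {h} (anc : List (Fin m₁ × Fin m₂)) (F₁ : List (HTree (Fin m₁) h))
      (F₂ : List (HTree (Fin m₂) h)), anc.length + h ≤ k + 1 →
      (underlying E₁).IsNormalForest F₁ →
      List.SublistForall₂ (HTree.Embeds (· ≤ ·))
        (F₁.map (profileTree E₁ k (anc.map Prod.fst)))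
        (F₂.map (profileTree E₂ k (anc.map Prod.snd))) →
      Pairing E₁ E₂ anc (F₁.flatMap HTree.toList) (F₂.flatMap HTree.toList)
  | 0, _, [], _, _, _, _ => Pairing.nil
  | 0, _, t :: _, _, _, _, _ => t.elim
  | h + 1, anc, F₁, F₂, hlen, hnormal, hemb => by
    rw [List.sublistForall₂_map_left_iff, List.sublistForall₂_map_right_iff] at hemb
    refine Pairing.flatMap_of_sublistForall₂ hemb (fun t ht t' htt' => ?_)
      (hnormal.2.imp noEdgesBetween_of_apart)
    obtain ⟨x, cs⟩ := t
    obtain ⟨x', ds⟩ := t'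
    obtain ⟨hroot, hchildren⟩ := htt'
    obtain ⟨hloop, hanc⟩ := edgeLE_of_profile_le (k := k) (by omega) hroot
    exact (pairing_of_sublistForall₂_profileTree (k := k) ((x, x') :: anc) cs ds (by simp; omega)
      (hnormal.1 _ ht) (by simpa [profileTree, HTree.node] using hchildren)).cons hloop hanc

end Multigraph

/-- Ding: the subgraph ordering is a wqo on finite directed edge-labelled
multigraphs over a finite label set whose undirected paths have length at most `k`. -/
theorem stmt_10 {Λ : Type*} [Fintype Λ] (k : ℕ)
    (m : ℕ → ℕ) (E : ∀ i : ℕ, Fin (m i) → Fin (m i) → Λ → ℕ)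
    (hpath : ∀ i : ℕ, ∀ u v : Fin (m i), ∀ p : (underlying (E i)).Walk u v,
      p.IsPath → p.length ≤ k) :
    ∃ i j : ℕ, i < j ∧
      ∃ f : Fin (m i) → Fin (m j), Function.Injective f ∧
        ∀ (u v : Fin (m i)) (l : Λ), E i u v l ≤ E j (f u) (f v) l := by
  choose F hF_normal hF_nodup hF_mem using fun i =>
    (underlying (E i)).exists_normalForest_of_path_length_le (hpath i)
  obtain ⟨i, j, hij, hemb⟩ :=
    (HTree.wellQuasiOrdered_embeds (α := Multigraph.Profile Λ k) wellQuasiOrdered_le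
      (k + 1)).sublistForall₂ fun i => (F i).map (Multigraph.profileTree (E i) k [])
  obtain ⟨f, hf_inj, hf⟩ := (Multigraph.pairing_of_sublistForall₂_profileTree (k := k) [] (F i)
    (F j) (by simp) (hF_normal i) hemb).exists_injective (hF_mem i) (hF_nodup j)
  exact ⟨i, j, hij, f, hf_inj, hf⟩
end

section
/- Let Λ be a finite set of edge labels and n, k ∈ ℕ. Consider any infinite sequence G₀, G₁, G₂, … of finite directed edge-labelled multigraphs over Λ (say G_i has vertex set Fin(m_i) and edge-count function E_i : Fin(m_i) → Fin(m_i) → Λ → ℕ) such that in every G_i every undirected path has length at most n and E_i(u, v, λ) ≤ k for all u, v, λ (bounded edge multiplicity). Then there exist indices i < j such that G_i is an induced subgraph of G_j, i.e., there is an injective map f : Fin(m_i) → Fin(m_j) with E_i(u, v, λ) = E_j(f(u), f(v), λ) for all vertices u, v and all λ ∈ Λ. -/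
/-!
A depth-first search forest of the underlying graph has depth at most `n + 1`, because its
branches are paths, and every edge joins a vertex to one of its ancestors. Label each vertex by
the edge counts between it and the vertices of its branch (itself, then its ancestors, nearest
first): a list of bounded length over a finite set. By Higman's lemma and induction on the depth,
forests of bounded depth with labels from a finite set are well-quasi-ordered by embeddings
sending roots to roots and children to distinct children. Such an embedding between the labelled
forests of `G i` and `G j` maps branches to branches, hence gives an injective vertex map that
preserves the edge counts between comparable vertices; incomparable vertices are non-adjacent in
both graphs, so the map preserves all edge counts.
-/

universe u v

namespace List

variable {α β γ : Type*} {R : α → β → Prop} {S : β → γ → Prop} {T : α → γ → Prop}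

theorem SublistForall₂.imp_of_mem {R' : α → β → Prop} {l₁ : List α} {l₂ : List β}
    (H : ∀ a ∈ l₁, ∀ b, R a b → R' a b) (h : SublistForall₂ R l₁ l₂) :
    SublistForall₂ R' l₁ l₂ := by
  induction h with
  | nil => exact .nil
  | cons hr _ ih =>
    exact .cons (H _ mem_cons_self _ hr) (ih fun a ha => H a (mem_cons_of_mem _ ha))
  | cons_right _ ih => exact .cons_right (ih H)

theorem SublistForall₂.trans_of_mem {l₁ : List α} {l₂ : List β} {l₃ : List γ}
    (H : ∀ a ∈ l₁, ∀ b c, R a b → S b c → T a c)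
    (h₁ : SublistForall₂ R l₁ l₂) (h₂ : SublistForall₂ S l₂ l₃) : SublistForall₂ T l₁ l₃ := by
  induction h₂ generalizing l₁ with
  | nil => cases h₁; exact .nil
  | cons hs _ ih =>
    cases h₁ with
    | nil => exact .nil
    | cons hr h₁ =>
      exact .cons (H _ mem_cons_self _ _ hr hs) (ih (fun a ha => H a (mem_cons_of_mem _ ha)) h₁)
    | cons_right h₁ => exact .cons_right (ih H h₁)
  | cons_right _ ih => exact .cons_right (ih H h₁)

end List

theorem SimpleGraph.length_le_of_isChain {V : Type*} {G : SimpleGraph V} {n : ℕ}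
    (hpath : ∀ u v : V, ∀ p : G.Walk u v, p.IsPath → p.length ≤ n) {l : List V} (hl : l ≠ [])
    (hc : l.IsChain G.Adj) (hnd : l.Nodup) : l.length ≤ n + 1 := by
  have hlen := hpath _ _ (Walk.ofSupport l hl hc)
    (by rw [Walk.isPath_def, Walk.support_ofSupport]; exact hnd)
  have := (Walk.ofSupport l hl hc).length_support
  rw [Walk.support_ofSupport] at this
  omega

theorem Set.Finite.lists_length_le {X : Type*} {s : Set X} (hs : s.Finite) (N : ℕ) :
    {l : List X | l.length ≤ N ∧ ∀ x ∈ l, x ∈ s}.Finite := by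
  have := hs.to_subtype
  refine ((List.finite_length_le s N).image (List.map Subtype.val)).subset ?_
  rintro l ⟨hl, hmem⟩
  lift l to List s using hmem
  exact ⟨l, by simpa using hl, rfl⟩

inductive RoseTree (α : Type u) : Type u
  | node (a : α) (children : List (RoseTree α)) : RoseTree α

namespace RoseTree

section Basic

variable {α : Type u}

def root : RoseTree α → α
  | node a _ => a

def children : RoseTree α → List (RoseTree α)
  | node _ ts => ts

def labels : RoseTree α → List α
  | node a ts => a :: ts.flatMap labels

def depth : RoseTree α → ℕ
  | node _ ts => (ts.map depth).foldr max 0 + 1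

def map {β : Type v} (f : α → β) : RoseTree α → RoseTree β
  | node a ts => node (f a) (ts.map (map f))

theorem eta : ∀ t : RoseTree α, node t.root t.children = t
  | node _ _ => rfl

theorem root_mem_labels : ∀ t : RoseTree α, t.root ∈ t.labels
  | node _ _ => by simp [root, labels]

theorem labels_subset_of_mem_children {t s : RoseTree α} (h : s ∈ t.children) :
    s.labels ⊆ t.labels := by
  cases t
  simp only [labels]
  exact fun a ha => List.mem_cons_of_mem _ (List.mem_flatMap.2 ⟨s, h, ha⟩)

theorem one_le_depth : ∀ t : RoseTree α, 1 ≤ t.depth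
  | node _ _ => by simp [depth]

theorem depth_lt_of_mem_children {t s : RoseTree α} (h : s ∈ t.children) :
    s.depth < t.depth := by
  cases t
  simp only [children] at h
  have := List.le_max_of_le (List.mem_map_of_mem (f := depth) h) le_rfl
  simp only [depth]
  simpa using this

theorem depth_node_le {a : α} {ts : List (RoseTree α)} {n : ℕ} (h : ∀ t ∈ ts, t.depth ≤ n) :
    (node a ts).depth ≤ n + 1 := by
  have := List.max_le_of_forall_le (ts.map depth) n (by simpa using h)
  simp only [depth]
  simpa using this

theorem labels_map {β : Type v} (f : α → β) : ∀ t : RoseTree α, (t.map f).labels = t.labels.map f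
  | node a ts => by
    simp only [map, labels, List.map_cons, List.map_flatMap, List.flatMap_map]
    exact congrArg _ (List.flatMap_congr fun t _ => labels_map f t)

theorem depth_map {β : Type v} (f : α → β) : ∀ t : RoseTree α, (t.map f).depth = t.depth
  | node a ts => by
    simp only [map, depth, List.map_map]
    exact congrArg (· + 1) (congrArg _ (List.map_congr_left fun t _ => depth_map f t))

end Basic

section Embeds

variable {α : Type u} {α' : Type v}

-- Unlike Kruskal's homeomorphic embedding, children must go to children: this keeps ancestor
-- lists aligned, and bounded depth makes it a well-quasi-order all the same.
inductive Embeds (r : α → α' → Prop) : RoseTree α → RoseTree α' → Prop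
  | node {a b ts us} :
      r a b → List.SublistForall₂ (Embeds r) ts us → Embeds r (node a ts) (node b us)

theorem Embeds.of_map {γ δ : Type*} {r : γ → δ → Prop} {φ : α → γ} {ψ : α' → δ} :
    ∀ {t : RoseTree α} {u : RoseTree α'}, Embeds r (t.map φ) (u.map ψ) →
      Embeds (fun a b => r (φ a) (ψ b)) t u
  | .node a ts, .node b us, h => by
    simp only [map] at h
    obtain ⟨hab, h⟩ := h
    rw [List.sublistForall₂_map_left_iff, List.sublistForall₂_map_right_iff] at h
    exact .node hab (h.imp_of_mem fun t _ u => Embeds.of_map)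

variable {r : α → α → Prop}

theorem embeds_refl [Std.Refl r] : ∀ t : RoseTree α, Embeds r t t
  | node a ts => .node (refl a) <| List.sublistForall₂_iff.2
      ⟨ts, List.forall₂_same.2 fun t _ => embeds_refl t, .refl ts⟩

theorem embeds_trans [IsTrans α r] :
    ∀ {t u v : RoseTree α}, Embeds r t u → Embeds r u v → Embeds r t v
  | node _ _, _, _, .node hab htu, .node hbc huv =>
    .node (_root_.trans hab hbc)
      (htu.trans_of_mem (S := Embeds r) (fun _ _ _ _ => embeds_trans) huv)

instance [IsPreorder α r] : IsPreorder (RoseTree α) (Embeds r) where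
  refl := embeds_refl
  trans _ _ _ := embeds_trans

theorem partiallyWellOrderedOn_embeds [IsPreorder α r] {L : Set α}
    (hL : L.PartiallyWellOrderedOn r) :
    ∀ n : ℕ, {t : RoseTree α | t.depth ≤ n ∧ ∀ a ∈ t.labels, a ∈ L}.PartiallyWellOrderedOn
      (Embeds r)
  | 0 => (Set.partiallyWellOrderedOn_empty _).mono fun t ht => by
      have := one_le_depth t
      have := ht.1
      omega
  | n + 1 => by
    rw [Set.partiallyWellOrderedOn_iff_exists_lt]
    intro f hf
    obtain ⟨g, hg⟩ := hL.exists_monotone_subseq fun i => (hf i).2 _ (root_mem_labels _)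
    have hchildren := (partiallyWellOrderedOn_embeds hL n).partiallyWellOrderedOn_sublistForall₂
    obtain ⟨i, j, hij, hsub⟩ := hchildren.exists_lt (f := fun i => (f (g i)).children)
      fun i t ht => ⟨by have := depth_lt_of_mem_children ht; have := (hf (g i)).1; omega,
        fun a ha => (hf (g i)).2 a (labels_subset_of_mem_children ht ha)⟩
    refine ⟨g i, g j, g.strictMono hij, ?_⟩
    rw [← eta (f (g i)), ← eta (f (g j))]
    exact .node (hg i j hij.le) hsub

end Embeds

section Keys

variable {β : Type u} {β' : Type v}

-- Labels are pairs (key, keys of the proper ancestors, nearest first); `c` lists the keys above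
-- the root.
inductive AncestorKeys : List β → RoseTree (β × List β) → Prop
  | node {v : β} {c : List β} {ts : List (RoseTree (β × List β))} :
      (∀ t ∈ ts, AncestorKeys (v :: c) t) → AncestorKeys c (node (v, c) ts)

def keys (F : List (RoseTree (β × List β))) : List β :=
  (F.flatMap labels).map Prod.fst

@[simp]
theorem keys_nil : keys ([] : List (RoseTree (β × List β))) = [] := rfl

theorem keys_append (F₁ F₂ : List (RoseTree (β × List β))) :
    keys (F₁ ++ F₂) = keys F₁ ++ keys F₂ := by
  simp [keys]

theorem keys_cons (t : RoseTree (β × List β)) (F : List (RoseTree (β × List β))) :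
    keys (t :: F) = keys [t] ++ keys F := by
  simp [keys]

theorem keys_node_cons (a : β × List β) (ts F : List (RoseTree (β × List β))) :
    keys (node a ts :: F) = a.1 :: (keys ts ++ keys F) := by
  simp [keys, labels]

theorem mem_keys {F : List (RoseTree (β × List β))} {x : β} :
    x ∈ keys F ↔ ∃ p ∈ F.flatMap labels, p.1 = x := by
  simp [keys]

theorem AncestorKeys.suffix {c : List β} {t : RoseTree (β × List β)} (h : AncestorKeys c t) :
    ∀ p ∈ t.labels, c <:+ p.2 := by
  induction h with
  | @node v c ts _ ih =>
    intro p hp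
    simp only [labels, List.mem_cons, List.mem_flatMap] at hp
    rcases hp with rfl | ⟨t, ht, hp⟩
    · exact List.suffix_refl c
    · exact (List.suffix_cons v c).trans (ih t ht p hp)

theorem AncestorKeys.depth_add_length_le {n : ℕ} {c : List β} {t : RoseTree (β × List β)}
    (h : AncestorKeys c t) (hn : ∀ p ∈ t.labels, p.2.length ≤ n) :
    t.depth + c.length ≤ n + 1 := by
  induction h with
  | @node v c ts _ ih =>
    have hc : c.length ≤ n := hn (v, c) (root_mem_labels (RoseTree.node (v, c) ts))
    have hts : ∀ t ∈ ts, t.depth ≤ n - c.length := fun t ht => by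
      have := ih t ht fun p hp =>
        hn p (labels_subset_of_mem_children (t := RoseTree.node (v, c) ts) ht hp)
      simp only [List.length_cons] at this
      omega
    have := depth_node_le (a := (v, c)) hts
    omega

variable (r : β × List β → β' × List β' → Prop)

-- Stated relative to the contexts `c`, `c'` above the roots so that it can be assembled from
-- subforests.
def KeyEmbedding (c : List β) (c' : List β') (ts : List (RoseTree (β × List β)))
    (us : List (RoseTree (β' × List β'))) (g : β → β') : Prop :=
  Set.InjOn g {x | x ∈ keys ts} ∧
  ∀ p ∈ ts.flatMap labels, ∃ q ∈ us.flatMap labels, q.1 = g p.1 ∧ r p q ∧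
    ∃ pre : List β, (∀ x ∈ pre, x ∈ keys ts) ∧ p.2 = pre ++ c ∧ q.2 = pre.map g ++ c'

variable {r} {c : List β} {c' : List β'} {ts : List (RoseTree (β × List β))}
  {us : List (RoseTree (β' × List β'))} {g : β → β'}

theorem keyEmbedding_nil (g : β → β') : KeyEmbedding r c c' [] us g :=
  ⟨by simp [Set.InjOn], by simp⟩

theorem KeyEmbedding.mapsTo (h : KeyEmbedding r c c' ts us g) {x : β} (hx : x ∈ keys ts) :
    g x ∈ keys us := by
  obtain ⟨p, hp, rfl⟩ := mem_keys.1 hx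
  obtain ⟨q, hq, hqp, -⟩ := h.2 p hp
  exact mem_keys.2 ⟨q, hq, hqp⟩

theorem KeyEmbedding.mono_right {us' : List (RoseTree (β' × List β'))}
    (h : KeyEmbedding r c c' ts us g) (hus : us ⊆ us') : KeyEmbedding r c c' ts us' g := by
  refine ⟨h.1, fun p hp => ?_⟩
  obtain ⟨q, hq, hrest⟩ := h.2 p hp
  obtain ⟨u, hu, hq⟩ := List.mem_flatMap.1 hq
  exact ⟨q, List.mem_flatMap.2 ⟨u, hus hu, hq⟩, hrest⟩

theorem KeyEmbedding.congr {g' : β → β'} (h : KeyEmbedding r c c' ts us g)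
    (hg : Set.EqOn g g' {x | x ∈ keys ts}) : KeyEmbedding r c c' ts us g' := by
  refine ⟨h.1.congr hg, fun p hp => ?_⟩
  obtain ⟨q, hq, hqp, hpq, pre, hpre, hp2, hq2⟩ := h.2 p hp
  refine ⟨q, hq, hqp.trans (hg (mem_keys.2 ⟨p, hp, rfl⟩)), hpq, pre, hpre, hp2, ?_⟩
  rw [hq2, List.map_congr_left fun x hx => hg (hpre x hx)]

theorem KeyEmbedding.append_left {ts₂ : List (RoseTree (β × List β))}
    (h₁ : KeyEmbedding r c c' ts us g) (h₂ : KeyEmbedding r c c' ts₂ us g)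
    (hne : ∀ x ∈ keys ts, ∀ y ∈ keys ts₂, g x ≠ g y) :
    KeyEmbedding r c c' (ts ++ ts₂) us g := by
  refine ⟨?_, fun p hp => ?_⟩
  · simp only [keys_append, List.mem_append]
    rintro x (hx | hx) y (hy | hy) hxy
    exacts [h₁.1 hx hy hxy, (hne x hx y hy hxy).elim, (hne y hy x hx hxy.symm).elim,
      h₂.1 hx hy hxy]
  · rw [List.flatMap_append, List.mem_append] at hp
    rcases hp with hp | hp
    · obtain ⟨q, hq, hqp, hpq, pre, hpre, hrest⟩ := h₁.2 p hp
      exact ⟨q, hq, hqp, hpq, pre, fun x hx => by simp [keys_append, hpre x hx], hrest⟩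
    · obtain ⟨q, hq, hqp, hpq, pre, hpre, hrest⟩ := h₂.2 p hp
      exact ⟨q, hq, hqp, hpq, pre, fun x hx => by simp [keys_append, hpre x hx], hrest⟩

theorem KeyEmbedding.node [DecidableEq β] {a : β} {b : β'} (hab : r (a, c) (b, c'))
    (ha : a ∉ keys ts) (hb : b ∉ keys us) (h : KeyEmbedding r (a :: c) (b :: c') ts us g) :
    KeyEmbedding r c c' [.node (a, c) ts] [.node (b, c') us] (Function.update g a b) := by
  have h' := h.congr (g' := Function.update g a b) fun x (hx : x ∈ keys ts) =>
    (Function.update_of_ne (ne_of_mem_of_not_mem hx ha) _ _).symm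
  refine ⟨?_, fun p hp => ?_⟩
  · have : {x | x ∈ keys [.node (a, c) ts]} = insert a {x | x ∈ keys ts} := by
      ext; simp [keys_node_cons]
    rw [this, Set.injOn_insert (s := {x | x ∈ keys ts}) ha]
    refine ⟨h'.1, fun ⟨x, hx, hxb⟩ => hb ?_⟩
    rw [← Function.update_self a b g, ← hxb]
    exact h'.mapsTo hx
  · simp only [List.flatMap_cons, List.flatMap_nil, labels, List.append_nil,
      List.mem_cons] at hp
    rcases hp with rfl | hp
    · exact ⟨(b, c'), by simp [labels], by simp, hab, [], by simp, by simp, by simp⟩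
    · obtain ⟨q, hq, hqp, hpq, pre, hpre, hp2, hq2⟩ := h'.2 p hp
      refine ⟨q, ?_, hqp, hpq, pre ++ [a], ?_, by simp [hp2], by simp [hq2]⟩
      · simp only [List.flatMap_cons, List.flatMap_nil, labels, List.append_nil]
        exact List.mem_cons_of_mem _ hq
      · intro x hx
        rw [List.mem_append, List.mem_singleton] at hx
        rw [keys_node_cons, keys_nil, List.append_nil, List.mem_cons]
        exact hx.elim (fun hx => .inr (hpre x hx)) .inl

theorem KeyEmbedding.append {ts₂ : List (RoseTree (β × List β))}
    {us₂ : List (RoseTree (β' × List β'))} {g₂ : β → β'}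
    (h₁ : KeyEmbedding r c c' ts us g) (h₂ : KeyEmbedding r c c' ts₂ us₂ g₂)
    (hts : ∀ x ∈ keys ts, x ∉ keys ts₂) (hus : ∀ y ∈ keys us, y ∉ keys us₂) :
    ∃ g', KeyEmbedding r c c' (ts ++ ts₂) (us ++ us₂) g' := by
  classical
  let g' x := if x ∈ keys ts then g x else g₂ x
  have h₁' := (h₁.congr (g' := g') fun x hx => (if_pos hx).symm).mono_right
    (List.subset_append_left us us₂)
  have h₂' := (h₂.congr (g' := g') fun x hx => (if_neg fun h => hts x h hx).symm).mono_right
    (List.subset_append_right us us₂)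
  refine ⟨g', h₁'.append_left h₂' fun x hx y hy hxy => hus (g x) (h₁.mapsTo hx) ?_⟩
  have hy' : y ∉ keys ts := fun h => hts y h hy
  simp only [g', if_pos hx, if_neg hy'] at hxy
  exact hxy ▸ h₂.mapsTo hy

theorem exists_keyEmbedding [Nonempty β'] {ts : List (RoseTree (β × List β))}
    {us : List (RoseTree (β' × List β'))} (h : List.SublistForall₂ (Embeds r) ts us)
    {c : List β} {c' : List β'} (hts : ∀ t ∈ ts, AncestorKeys c t)
    (hus : ∀ u ∈ us, AncestorKeys c' u) (hk : (keys ts).Nodup) (hk' : (keys us).Nodup) :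
    ∃ g, KeyEmbedding r c c' ts us g := by
  classical
  match h with
  | .nil => exact ⟨Classical.arbitrary _, keyEmbedding_nil _⟩
  | .cons_right h =>
    rw [keys_cons] at hk'
    obtain ⟨g, hg⟩ := exists_keyEmbedding h hts (fun u hu => hus u (.tail _ hu)) hk
      hk'.of_append_right
    exact ⟨g, hg.mono_right (List.subset_cons_self _ _)⟩
  | .cons (.node hab hsub) h =>
    cases hts _ List.mem_cons_self with | node htc =>
    cases hus _ List.mem_cons_self with | node huc =>
    have hd := List.disjoint_of_nodup_append (keys_cons _ _ ▸ hk)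
    have hd' := List.disjoint_of_nodup_append (keys_cons _ _ ▸ hk')
    rw [keys_node_cons, List.nodup_cons, List.nodup_append] at hk hk'
    obtain ⟨g₁, hg₁⟩ := exists_keyEmbedding hsub htc huc hk.2.1 hk'.2.1
    obtain ⟨g₂, hg₂⟩ := exists_keyEmbedding h (fun t ht => hts t (.tail _ ht))
      (fun u hu => hus u (.tail _ hu)) hk.2.2.1 hk'.2.2.1
    exact (hg₁.node hab (fun h => hk.1 (List.mem_append_left _ h))
      (fun h => hk'.1 (List.mem_append_left _ h))).append hg₂ (fun _ hx => hd hx)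
      (fun _ hy => hd' hy)
termination_by (sizeOf ts, sizeOf us)

end Keys

end RoseTree

section DFS

open RoseTree

variable {V : Type*} (G : SimpleGraph V)

-- A state of depth-first search below the path `c`: `F` was grown from the unvisited vertices `s`,
-- and `s'` is still unvisited.
structure IsDFSForest (c : List V) (s : Finset V) (F : List (RoseTree (V × List V)))
    (s' : Finset V) : Prop where
  subset : s' ⊆ s
  ancestorKeys : ∀ t ∈ F, AncestorKeys c t
  nodup : (keys F).Nodup
  mem_keys : ∀ v, v ∈ keys F ↔ v ∈ s ∧ v ∉ s'
  isPath : ∀ p ∈ F.flatMap labels, (p.1 :: p.2).Nodup ∧ (p.1 :: p.2).IsChain G.Adj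
  not_adj : ∀ p ∈ F.flatMap labels, ∀ q ∈ F.flatMap labels,
    p.1 ∉ q.1 :: q.2 → q.1 ∉ p.1 :: p.2 → ¬ G.Adj p.1 q.1
  not_adj_unvisited : ∀ u ∈ s', ∀ v ∈ keys F, ¬ G.Adj u v

variable {G}

theorem isDFSForest_nil (c : List V) (s : Finset V) : IsDFSForest G c s [] s where
  subset := subset_rfl
  ancestorKeys := by simp
  nodup := List.nodup_nil
  mem_keys := by simp
  isPath := by simp
  not_adj := by simp
  not_adj_unvisited := by simp

theorem IsDFSForest.node [DecidableEq V] {v : V} {c : List V} {s s' : Finset V}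
    {F : List (RoseTree (V × List V))}
    (hF : IsDFSForest G (v :: c) s F s') (hv : v ∉ s)
    (hvc : (v :: c).Nodup ∧ (v :: c).IsChain G.Adj) (hs' : ∀ u ∈ s', ¬ G.Adj v u) :
    IsDFSForest G c (insert v s) [.node (v, c) F] s' := by
  have hkeys : keys [.node (v, c) F] = v :: keys F := by simp [keys_node_cons]
  have hlabels : [RoseTree.node (v, c) F].flatMap labels = (v, c) :: F.flatMap labels := by
    simp [labels]
  have hanc : ∀ p ∈ F.flatMap labels, v ∈ p.2 := fun p hp => by
    obtain ⟨t, ht, hp⟩ := List.mem_flatMap.1 hp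
    exact ((hF.ancestorKeys t ht).suffix p hp).subset List.mem_cons_self
  refine ⟨hF.subset.trans (Finset.subset_insert v s), ?_, ?_, fun u => ?_, ?_, ?_, ?_⟩
  · simpa using AncestorKeys.node hF.ancestorKeys
  · rw [hkeys, List.nodup_cons]
    exact ⟨fun h => hv ((hF.mem_keys v).1 h).1, hF.nodup⟩
  · rw [hkeys, List.mem_cons, hF.mem_keys, Finset.mem_insert]
    have : v ∉ s' := fun h => hv (hF.subset h)
    by_cases huv : u = v
    · simp [huv, this]
    · simp [huv]
  · rw [hlabels]
    rintro p (_ | ⟨_, hp⟩)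
    exacts [hvc, hF.isPath p hp]
  · rw [hlabels]
    rintro p (_ | ⟨_, hp⟩) q (_ | ⟨_, hq⟩) hpq hqp
    · simp at hpq
    · exact absurd (List.mem_cons_of_mem _ (hanc q hq)) hpq
    · exact absurd (List.mem_cons_of_mem _ (hanc p hp)) hqp
    · exact hF.not_adj p hp q hq hpq hqp
  · rw [hkeys]
    rintro u hu x (_ | ⟨_, hx⟩)
    exacts [fun h => hs' u hu h.symm, hF.not_adj_unvisited u hu x hx]

theorem IsDFSForest.append {c : List V} {s s₁ s' : Finset V}
    {F₁ F₂ : List (RoseTree (V × List V))} (h₁ : IsDFSForest G c s F₁ s₁)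
    (h₂ : IsDFSForest G c s₁ F₂ s') : IsDFSForest G c s (F₁ ++ F₂) s' := by
  have hk₁ : ∀ x ∈ keys F₁, x ∉ s₁ := fun x hx => ((h₁.mem_keys x).1 hx).2
  have hk₂ : ∀ x ∈ keys F₂, x ∈ s₁ := fun x hx => ((h₂.mem_keys x).1 hx).1
  refine ⟨h₂.subset.trans h₁.subset, ?_, ?_, fun v => ?_, ?_, ?_, ?_⟩
  · exact fun t ht => (List.mem_append.1 ht).elim (h₁.ancestorKeys t) (h₂.ancestorKeys t)
  · rw [keys_append, List.nodup_append]
    exact ⟨h₁.nodup, h₂.nodup, fun x hx y hy hxy => hk₁ x hx (hxy ▸ hk₂ y hy)⟩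
  · rw [keys_append, List.mem_append, h₁.mem_keys, h₂.mem_keys]
    have := @h₁.subset v
    have := @h₂.subset v
    tauto
  · intro p hp
    rw [List.flatMap_append, List.mem_append] at hp
    exact hp.elim (h₁.isPath p) (h₂.isPath p)
  · have cross : ∀ p ∈ F₁.flatMap labels, ∀ q ∈ F₂.flatMap labels, ¬ G.Adj p.1 q.1 :=
      fun p hp q hq h => h₁.not_adj_unvisited q.1 (hk₂ _ (RoseTree.mem_keys.2 ⟨q, hq, rfl⟩)) p.1
        (RoseTree.mem_keys.2 ⟨p, hp, rfl⟩) h.symm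
    simp only [List.flatMap_append, List.mem_append]
    rintro p (hp | hp) q (hq | hq) hpq hqp
    exacts [h₁.not_adj p hp q hq hpq hqp, cross p hp q hq, fun h => cross q hq p hp h.symm,
      h₂.not_adj p hp q hq hpq hqp]
  · rw [keys_append]
    rintro u hu x hx
    rcases List.mem_append.1 hx with hx | hx
    exacts [h₁.not_adj_unvisited u (h₂.subset hu) x hx, h₂.not_adj_unvisited u hu x hx]

theorem exists_isDFSForest [DecidableEq V] (s : Finset V) (c : List V) (P : V → Prop)
    (hc : c.Nodup) (hsc : ∀ v ∈ s, v ∉ c) (hP : ∀ v ∈ s, P v → (v :: c).IsChain G.Adj) :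
    ∃ F s', IsDFSForest G c s F s' ∧ ∀ v ∈ s', ¬ P v := by
  induction s using Finset.strongInduction generalizing c P with
  | H s ih =>
  by_cases hex : ∃ v ∈ s, P v
  · obtain ⟨v, hvs, hv⟩ := hex
    have hvc : (v :: c).Nodup := List.nodup_cons.2 ⟨hsc v hvs, hc⟩
    obtain ⟨F₁, s₁, hF₁, hs₁⟩ := ih (s.erase v) (Finset.erase_ssubset hvs) (v :: c) (G.Adj v) hvc
      (fun u hu => by
        rw [List.mem_cons, not_or]
        exact ⟨Finset.ne_of_mem_erase hu, hsc u (Finset.mem_of_mem_erase hu)⟩)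
      (fun u _ huv => List.isChain_cons_cons.2 ⟨huv.symm, hP v hvs hv⟩)
    have hnode := hF₁.node (Finset.notMem_erase v s) ⟨hvc, hP v hvs hv⟩ hs₁
    rw [Finset.insert_erase hvs] at hnode
    have hs₁s : s₁ ⊂ s := hF₁.subset.trans_ssubset (Finset.erase_ssubset hvs)
    obtain ⟨F₂, s', hF₂, hs'⟩ := ih s₁ hs₁s c P hc (fun u hu => hsc u (hs₁s.subset hu))
      (fun u hu => hP u (hs₁s.subset hu))
    exact ⟨_, s', hnode.append hF₂, hs'⟩
  · push Not at hex
    exact ⟨[], s, isDFSForest_nil c s, hex⟩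

theorem exists_isDFSForest_univ [Fintype V] [DecidableEq V] :
    ∃ F, IsDFSForest G [] Finset.univ F ∅ := by
  obtain ⟨F, s', hF, hs'⟩ :=
    exists_isDFSForest (G := G) Finset.univ [] (fun _ => True) List.nodup_nil (by simp) (by simp)
  obtain rfl : s' = ∅ := Finset.eq_empty_of_forall_notMem fun v hv => hs' v hv trivial
  exact ⟨F, hF⟩

theorem IsDFSForest.length_le {n : ℕ} {c : List V} {s s' : Finset V}
    {F : List (RoseTree (V × List V))} (hF : IsDFSForest G c s F s')
    (hpath : ∀ u v : V, ∀ p : G.Walk u v, p.IsPath → p.length ≤ n) :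
    ∀ p ∈ F.flatMap labels, p.2.length ≤ n := fun p hp => by
  have := G.length_le_of_isChain hpath (List.cons_ne_nil _ _) (hF.isPath p hp).2
    (hF.isPath p hp).1
  simpa using this

end DFS

section Graphs

open RoseTree

variable {Λ : Type*}

def branchEdgeCounts {V : Type*} (E : V → V → Λ → ℕ) (p : V × List V) :
    List ((Λ → ℕ) × (Λ → ℕ)) :=
  (p.1 :: p.2).map fun w => (E p.1 w, E w p.1)

theorem edgeCount_eq_of_branches {V W : Type*} {E : V → V → Λ → ℕ} {E' : W → W → Λ → ℕ}
    {P : List (V × List V)} {Q : List (W × List W)} {f : V → W} (hf : Function.Injective f)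
    (hP : ∀ v, ∃ p ∈ P, p.1 = v)
    (hPE : ∀ p ∈ P, ∀ q ∈ P, p.1 ∉ q.1 :: q.2 → q.1 ∉ p.1 :: p.2 → E p.1 q.1 = 0)
    (hQE : ∀ p ∈ Q, ∀ q ∈ Q, p.1 ∉ q.1 :: q.2 → q.1 ∉ p.1 :: p.2 → E' p.1 q.1 = 0)
    (hPQ : ∀ p ∈ P, ∃ q ∈ Q, q.1 = f p.1 ∧ q.2 = p.2.map f ∧
      branchEdgeCounts E p = branchEdgeCounts E' q) (u v : V) :
    E u v = E' (f u) (f v) := by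
  have along : ∀ p q, q.1 = f p.1 → q.2 = p.2.map f →
      branchEdgeCounts E p = branchEdgeCounts E' q →
      ∀ w ∈ p.1 :: p.2, E p.1 w = E' (f p.1) (f w) ∧ E w p.1 = E' (f w) (f p.1) := by
    rintro p q h₁ h₂ h₃ w hw
    rw [branchEdgeCounts, branchEdgeCounts, h₁, h₂, ← List.map_cons, List.map_map] at h₃
    simpa using List.map_eq_map_iff.1 h₃ w hw
  obtain ⟨p, hp, rfl⟩ := hP u
  obtain ⟨p', hp', rfl⟩ := hP v
  obtain ⟨q, hq, hq₁, hq₂, hqE⟩ := hPQ p hp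
  obtain ⟨q', hq', hq₁', hq₂', hqE'⟩ := hPQ p' hp'
  by_cases h₁ : p'.1 ∈ p.1 :: p.2
  · exact (along p q hq₁ hq₂ hqE _ h₁).1
  by_cases h₂ : p.1 ∈ p'.1 :: p'.2
  · exact (along p' q' hq₁' hq₂' hqE' _ h₂).2
  rw [hPE p hp p' hp' h₂ h₁, ← hq₁, ← hq₁', hQE q hq q' hq']
  · rwa [hq₁, hq₁', hq₂', ← List.map_cons, List.mem_map_of_injective hf]
  · rwa [hq₁, hq₁', hq₂, ← List.map_cons, List.mem_map_of_injective hf]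

theorem IsDFSForest.edgeCount_eq_zero {m : ℕ} {E : Fin m → Fin m → Λ → ℕ} {c : List (Fin m)}
    {s s' : Finset (Fin m)} {F : List (RoseTree (Fin m × List (Fin m)))}
    (hF : IsDFSForest (underlying E) c s F s') :
    ∀ p ∈ F.flatMap labels, ∀ q ∈ F.flatMap labels,
      p.1 ∉ q.1 :: q.2 → q.1 ∉ p.1 :: p.2 → E p.1 q.1 = 0 := by
  intro p hp q hq hpq hqp
  funext l
  by_contra hl
  exact hF.not_adj p hp q hq hpq hqp
    ⟨fun h => hpq (h ▸ List.mem_cons_self), l, .inl (Nat.pos_of_ne_zero hl)⟩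

theorem exists_induced_of_sublistForall₂ {m m' : ℕ} {E : Fin m → Fin m → Λ → ℕ}
    {E' : Fin m' → Fin m' → Λ → ℕ} {F : List (RoseTree (Fin m × List (Fin m)))}
    {F' : List (RoseTree (Fin m' × List (Fin m')))}
    (hF : IsDFSForest (underlying E) [] Finset.univ F ∅)
    (hF' : IsDFSForest (underlying E') [] Finset.univ F' ∅)
    (h : List.SublistForall₂ (Embeds fun p q => branchEdgeCounts E p = branchEdgeCounts E' q)
      F F') :
    ∃ f : Fin m → Fin m', Function.Injective f ∧ ∀ u v l, E u v l = E' (f u) (f v) l := by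
  have hcover : ∀ v, v ∈ keys F := fun v => (hF.mem_keys v).2 (by simp)
  -- A key map into `Fin m'` needs a default value; if there is none, both forests are empty.
  rcases isEmpty_or_nonempty (Fin m') with hm' | hm'
  · obtain rfl : F' = [] := List.eq_nil_iff_forall_not_mem.2 fun t _ => isEmptyElim t.root.1
    cases h
    have : IsEmpty (Fin m) := ⟨fun v => by simpa using hcover v⟩
    exact ⟨isEmptyElim, fun a => isEmptyElim a, fun u => isEmptyElim u⟩
  obtain ⟨g, hg, hcorr⟩ :=
    exists_keyEmbedding h hF.ancestorKeys hF'.ancestorKeys hF.nodup hF'.nodup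
  refine ⟨g, fun u v huv => hg (hcover u) (hcover v) huv, fun u v => congrFun ?_⟩
  refine edgeCount_eq_of_branches (fun u v huv => hg (hcover u) (hcover v) huv)
    (fun v => mem_keys.1 (hcover v)) hF.edgeCount_eq_zero hF'.edgeCount_eq_zero
    (fun p hp => ?_) u v
  obtain ⟨q, hq, hq₁, hpq, pre, -, hp₂, hq₂⟩ := hcorr p hp
  simp only [List.append_nil] at hp₂ hq₂
  exact ⟨q, hq, hq₁, hq₂.trans (hp₂ ▸ rfl), hpq⟩

theorem finite_boundedCountLists [Finite Λ] (n k : ℕ) :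
    {d : List ((Λ → ℕ) × (Λ → ℕ)) | d.length ≤ n ∧ ∀ x ∈ d, ∀ l, x.1 l ≤ k ∧ x.2 l ≤ k}.Finite := by
  have hB : (Set.univ.pi fun _ : Λ => Set.Iic k).Finite := Set.Finite.pi fun _ => Set.finite_Iic k
  refine ((hB.prod hB).lists_length_le n).subset fun d ⟨hd, hx⟩ => ⟨hd, ?_⟩
  exact fun x hxd => ⟨fun l _ => (hx x hxd l).1, fun l _ => (hx x hxd l).2⟩

theorem IsDFSForest.map_branchEdgeCounts_mem {m n k : ℕ} {E : Fin m → Fin m → Λ → ℕ}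
    {s s' : Finset (Fin m)} {F : List (RoseTree (Fin m × List (Fin m)))}
    (hF : IsDFSForest (underlying E) [] s F s')
    (hpath : ∀ u v : Fin m, ∀ p : (underlying E).Walk u v, p.IsPath → p.length ≤ n)
    (hmult : ∀ u v l, E u v l ≤ k) {t : RoseTree (Fin m × List (Fin m))} (ht : t ∈ F) :
    (t.map (branchEdgeCounts E)).depth ≤ n + 1 ∧ ∀ d ∈ (t.map (branchEdgeCounts E)).labels,
      d.length ≤ n + 1 ∧ ∀ x ∈ d, ∀ l, x.1 l ≤ k ∧ x.2 l ≤ k := by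
  have hlen := fun p hp => hF.length_le hpath p (List.mem_flatMap.2 ⟨t, ht, hp⟩)
  refine ⟨?_, fun d hd => ?_⟩
  · simpa [depth_map] using (hF.ancestorKeys t ht).depth_add_length_le hlen
  · rw [labels_map] at hd
    obtain ⟨p, hp, rfl⟩ := List.mem_map.1 hd
    simpa [branchEdgeCounts, hmult] using hlen p hp

end Graphs

/-- the induced subgraph ordering is a wqo on finite directed edge-labelled
multigraphs over a finite label set whose undirected paths have length at most `n` and
whose edge multiplicities are bounded by `k`. -/
theorem stmt_11 {Λ : Type*} [Fintype Λ] (n k : ℕ)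
    (m : ℕ → ℕ) (E : ∀ i : ℕ, Fin (m i) → Fin (m i) → Λ → ℕ)
    (hpath : ∀ i : ℕ, ∀ u v : Fin (m i), ∀ p : (underlying (E i)).Walk u v,
      p.IsPath → p.length ≤ n)
    (hmult : ∀ (i : ℕ) (u v : Fin (m i)) (l : Λ), E i u v l ≤ k) :
    ∃ i j : ℕ, i < j ∧
      ∃ f : Fin (m i) → Fin (m j), Function.Injective f ∧
        ∀ (u v : Fin (m i)) (l : Λ), E i u v l = E j (f u) (f v) l := by
  classical
  choose F hF using fun i => exists_isDFSForest_univ (G := underlying (E i))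
  have hwqo := (RoseTree.partiallyWellOrderedOn_embeds (r := Eq)
    (finite_boundedCountLists (Λ := Λ) (n + 1) k).partiallyWellOrderedOn
    (n + 1)).partiallyWellOrderedOn_sublistForall₂
  obtain ⟨i, j, hij, h⟩ := hwqo.exists_lt
    (f := fun i => (F i).map (RoseTree.map (branchEdgeCounts (E i)))) fun i t ht => by
      obtain ⟨t, ht₀, rfl⟩ := List.mem_map.1 ht
      exact (hF i).map_branchEdgeCounts_mem (hpath i) (hmult i) ht₀
  rw [List.sublistForall₂_map_left_iff, List.sublistForall₂_map_right_iff] at h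
  exact ⟨i, j, hij, exists_induced_of_sublistForall₂ (hF i) (hF j)
    (h.imp_of_mem fun _ _ _ => RoseTree.Embeds.of_map)⟩
end

section
/- There exists an infinite sequence G₀, G₁, G₂, … of finite directed graphs (say G_i has vertex set Fin(m_i) and edge relation E_i ⊆ Fin(m_i) × Fin(m_i)) such that: (1) no G_i contains a directed path of length 2, i.e., there are no vertices a, b, c with E_i(a, b) and E_i(b, c); and (2) for all i < j there is no injective map f : Fin(m_i) → Fin(m_j) with E_i(u, v) implying E_j(f(u), f(v)). Consequently, the subgraph ordering is not a well-quasi-order on the class of finite directed graphs with bounded directed path length. -/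
/-!
Take the cycle of even length `n ≥ 4` with alternating orientation: every even vertex is a
source pointing to both of its neighbours, every odd vertex a sink, so there is no directed
path of length 2. An injective homomorphism `f` from the `M`-cycle into the `N`-cycle sends
consecutive vertices to vertices differing by `±1`; injectivity forbids `f (k + 2) = f k`, so
the sign never changes and `f` winds around `ℤ/N` in steps of a fixed `±1`. Closing up after
`M` steps forces `N ∣ M`, impossible for `4 ≤ M < N`.
-/

def altCycle (n : ℕ) [NeZero n] (a b : Fin n) : Prop :=
  Even a.val ∧ (b = a + 1 ∨ b = a - 1)

namespace Fin

theorem val_add_one_eq_zero_of_val_add_one_eq {n : ℕ} [NeZero n] {a : Fin n}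
    (h : a.val + 1 = n) : (a + 1).val = 0 := by
  rw [val_add, val_one', Nat.add_mod_mod, h, Nat.mod_self]

theorem even_val_add_one_of_not_even {n : ℕ} [NeZero n] {a : Fin n} (ha : ¬Even a.val) :
    Even (a + 1).val := by
  rcases Nat.lt_or_ge (a.val + 1) n with h | h
  · rw [val_add_one_of_lt' h]
    exact Nat.even_add_one.mpr ha
  · rw [val_add_one_eq_zero_of_val_add_one_eq (by have := a.isLt; omega)]
    exact Even.zero

theorem not_even_val_add_one_of_even {n : ℕ} [NeZero n] (hn : Even n) {a : Fin n}
    (ha : Even a.val) : ¬Even (a + 1).val := by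
  rcases Nat.lt_or_ge (a.val + 1) n with h | h
  · rw [val_add_one_of_lt' h]
    exact fun h => Nat.even_add_one.mp h ha
  · have hn' : a.val + 1 = n := by have := a.isLt; omega
    rw [← hn', Nat.even_add_one] at hn
    exact absurd ha hn

end Fin

namespace altCycle

variable {n : ℕ} [NeZero n]

theorem not_even_val_right (hn : Even n) {a b : Fin n} (h : altCycle n a b) : ¬Even b.val := by
  obtain ⟨ha, rfl | rfl⟩ := h
  · exact Fin.not_even_val_add_one_of_even hn ha
  · intro hb
    exact Fin.not_even_val_add_one_of_even hn hb (by rwa [sub_add_cancel])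

theorem self_add_one_or_add_one_self (a : Fin n) :
    altCycle n a (a + 1) ∨ altCycle n (a + 1) a := by
  by_cases ha : Even a.val
  · exact Or.inl ⟨ha, Or.inl rfl⟩
  · exact Or.inr ⟨Fin.even_val_add_one_of_not_even ha, Or.inr (add_sub_cancel_right a 1).symm⟩

end altCycle

theorem exists_eq_add_nsmul_of_no_backtrack {G : Type*} [AddGroup G] {e : G} {g : ℕ → G}
    (hstep : ∀ t, g (t + 1) = g t + e ∨ g (t + 1) = g t - e) (hback : ∀ t, g (t + 2) ≠ g t) :
    ∃ s, (s = e ∨ s = -e) ∧ ∀ t, g t = g 0 + t • s := by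
  have hstep' : ∀ t, ∃ d, (d = e ∨ d = -e) ∧ g (t + 1) = g t + d := fun t => by
    rcases hstep t with h | h
    exacts [⟨e, .inl rfl, h⟩, ⟨-e, .inr rfl, by rw [h, sub_eq_add_neg]⟩]
  obtain ⟨s, hs, h0⟩ := hstep' 0
  have hconst : ∀ t, g (t + 1) = g t + s := by
    intro t
    induction t with
    | zero => exact h0
    | succ t ih =>
      obtain ⟨d, hd, hgd⟩ := hstep' (t + 1)
      have : d = s ∨ d = -s := by
        rcases hs with rfl | rfl <;> rcases hd with rfl | rfl <;> simp
      rcases this with rfl | rfl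
      · exact hgd
      · exact absurd (by rw [hgd, ih, add_neg_cancel_right]) (hback t)
  refine ⟨s, hs, fun t => ?_⟩
  induction t with
  | zero => rw [zero_nsmul, add_zero]
  | succ t ih => rw [hconst, ih, succ_nsmul, add_assoc]

open Fin.CommRing in
theorem dvd_of_injective_altCycle_hom {M N : ℕ} [NeZero M] [NeZero N] (hM : 3 ≤ M)
    {f : Fin M → Fin N} (hf : Function.Injective f)
    (hE : ∀ u v, altCycle M u v → altCycle N (f u) (f v)) : N ∣ M := by
  set g : ℕ → Fin N := fun t => f t with hg
  have hstep : ∀ t, g (t + 1) = g t + 1 ∨ g (t + 1) = g t - 1 := by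
    intro t
    simp only [hg, Nat.cast_succ]
    rcases altCycle.self_add_one_or_add_one_self (t : Fin M) with h | h
    · exact (hE _ _ h).2
    · rcases (hE _ _ h).2 with h' | h'
      · exact .inr (eq_sub_of_add_eq h'.symm)
      · exact .inl (eq_add_of_sub_eq h'.symm)
  have hback : ∀ t, g (t + 2) ≠ g t := by
    intro t h
    have h2 : ((2 : ℕ) : Fin M) = 0 := by simpa [Nat.cast_add] using hf h
    exact absurd (Nat.le_of_dvd two_pos ((CharP.cast_eq_zero_iff (Fin M) M 2).mp h2)) (by omega)
  obtain ⟨s, hs, hgs⟩ := exists_eq_add_nsmul_of_no_backtrack hstep hback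
  have hMs : M • s = 0 := by
    have := hgs M
    simp only [hg, CharP.cast_eq_zero, Nat.cast_zero] at this
    exact left_eq_add.mp this
  have : (M : Fin N) = 0 := by
    rcases hs with rfl | rfl
    · rwa [nsmul_one] at hMs
    · rwa [smul_neg, neg_eq_zero, nsmul_one] at hMs
  exact (CharP.cast_eq_zero_iff (Fin N) N M).mp this

/-- there is an infinite antichain (for the subgraph ordering) of finite
directed graphs without directed paths of length 2; hence the subgraph ordering is not a
wqo on finite directed graphs with bounded directed path length. -/
theorem stmt_12 :
    ∃ (m : ℕ → ℕ) (E : ∀ i : ℕ, Fin (m i) → Fin (m i) → Prop),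
      (∀ i : ℕ, ¬ ∃ a b c : Fin (m i), E i a b ∧ E i b c) ∧
      (∀ i j : ℕ, i < j →
        ¬ ∃ f : Fin (m i) → Fin (m j), Function.Injective f ∧
            ∀ u v : Fin (m i), E i u v → E j (f u) (f v)) := by
  refine ⟨fun i => 2 * i + 4, fun i => altCycle (2 * i + 4), fun i => ?_, fun i j hij => ?_⟩
  · rintro ⟨a, b, c, hab, hbc⟩
    exact hab.not_even_val_right ⟨i + 2, by ring⟩ hbc.1
  · rintro ⟨f, hf, hE⟩
    have hdvd := dvd_of_injective_altCycle_hom (by show 3 ≤ 2 * i + 4; omega) hf hE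
    have : 2 * j + 4 ≤ 2 * i + 4 := Nat.le_of_dvd (Nat.succ_pos _) hdvd
    omega
end

section
/- Let G be a finite simple graph in which every path has length at most n (length measured by the number of edges). Then G has type at most n + 2. -/
/-- Reachability inside a vertex subset `A` of a simple graph `G`. -/
def reachIn {V : Type*} (G : SimpleGraph V) (A : Set V) : V → V → Prop :=
  Relation.ReflTransGen (fun a b => a ∈ A ∧ b ∈ A ∧ G.Adj a b)

/-- The connected component of `x` within the induced subgraph of `G` on `A`. -/
def compIn {V : Type*} (G : SimpleGraph V) (A : Set V) (x : V) : Set V :=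
  {y : V | y ∈ A ∧ reachIn G A x y}

/-- `TypeAtMost G m A` means the induced subgraph of `G` on the vertex set `A` has type at
most `m` (only possible for `m ≥ 1`): every connected component `C` of it either is a
single vertex, or `m ≥ 2` and some vertex `v` of `C` can be deleted so that `C \ {v}` has
type at most `m - 1`. -/
def TypeAtMost {V : Type*} (G : SimpleGraph V) : ℕ → Set V → Prop
  | 0, _ => False
  | m + 1, A => ∀ x ∈ A,
      compIn G A x = {x} ∨
      (2 ≤ m + 1 ∧ ∃ v ∈ compIn G A x, TypeAtMost G m (compIn G A x \ {v}))

section Aux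

variable {V : Type*} {G : SimpleGraph V}

lemma reachIn_symm {A : Set V} {a b : V} (h : reachIn G A a b) : reachIn G A b a := by
  induction h with
  | refl => exact Relation.ReflTransGen.refl
  | tail _ hbc ih =>
    exact Relation.ReflTransGen.head ⟨hbc.2.1, hbc.1, hbc.2.2.symm⟩ ih

lemma reachIn_trans {A : Set V} {a b c : V} (h1 : reachIn G A a b) (h2 : reachIn G A b c) :
    reachIn G A a c := Relation.ReflTransGen.trans h1 h2

lemma compIn_eq_of_mem {A : Set V} {x r : V} (hr : r ∈ compIn G A x) :
    compIn G A x = compIn G A r := by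
  ext y
  constructor
  · rintro ⟨hyA, hxy⟩
    exact ⟨hyA, reachIn_trans (reachIn_symm hr.2) hxy⟩
  · rintro ⟨hyA, hry⟩
    exact ⟨hyA, reachIn_trans hr.2 hry⟩

/-- From a nontrivial reachability chain starting at `r`, extract a neighbour `r'` of `r`
such that the target is reachable from `r'` while avoiding `r`. -/
lemma exists_first_step {A : Set V} {r y : V} (h : reachIn G A r y) :
    y ≠ r → ∃ r', G.Adj r r' ∧ r' ∈ A ∧ r' ≠ r ∧
      reachIn G (compIn G A r \ {r}) r' y := by
  induction h with
  | refl => intro h; exact absurd rfl h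
  | @tail b c hb hbc ih =>
    intro hcr
    obtain ⟨hbA, hcA, hadj⟩ := hbc
    by_cases hbr : b = r
    · subst hbr
      exact ⟨c, hadj, hcA, hcr, Relation.ReflTransGen.refl⟩
    · obtain ⟨r', h1, h2, h3, h4⟩ := ih hbr
      refine ⟨r', h1, h2, h3, h4.tail ⟨⟨⟨hbA, hb⟩, ?_⟩, ⟨⟨hcA, hb.tail ⟨hbA, hcA, hadj⟩⟩, ?_⟩, hadj⟩⟩
      · simpa using hbr
      · simpa using hcr

/-- Key lemma: if every component of `A` contains a vertex `r` from which every path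
inside `A` has length at most `m`, then `A` has type at most `m + 1`. -/
lemma typeAtMost_of_rooted_bound : ∀ (m : ℕ) (A : Set V),
    (∀ x ∈ A, ∃ r ∈ compIn G A x,
      ∀ z (p : G.Walk r z), p.IsPath → (∀ w ∈ p.support, w ∈ A) → p.length ≤ m) →
    TypeAtMost G (m + 1) A := by
  intro m
  induction m with
  | zero =>
    intro A hA x hx
    left
    obtain ⟨r, hrC, hbound⟩ := hA x hx
    have hcomp : compIn G A r = {r} := by
      ext y
      simp only [Set.mem_singleton_iff]
      constructor
      · rintro ⟨hyA, hry⟩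
        by_contra hyr
        obtain ⟨r', hadj, hr'A, hr'r, _⟩ := exists_first_step hry hyr
        have hp : (SimpleGraph.Walk.cons hadj SimpleGraph.Walk.nil : G.Walk r r').IsPath := by
          simp [hadj.ne]
        have := hbound r' _ hp (by
          intro w hw
          simp only [SimpleGraph.Walk.support_cons, SimpleGraph.Walk.support_nil,
            List.mem_cons, List.mem_singleton] at hw
          rcases hw with rfl | hw
          · exact hrC.1
          · rcases hw with rfl | hw
            · exact hr'A
            · simp at hw)
        simp at this
      · rintro rfl
        exact ⟨hrC.1, Relation.ReflTransGen.refl⟩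
    have hxr : x = r := by
      have hx' : x ∈ compIn G A r := by
        rw [← compIn_eq_of_mem hrC]
        exact ⟨hx, Relation.ReflTransGen.refl⟩
      rw [hcomp] at hx'
      exact hx'
    rw [compIn_eq_of_mem hrC, hcomp, hxr]
  | succ m ih =>
    intro A hA x hx
    right
    obtain ⟨r, hrC, hbound⟩ := hA x hx
    refine ⟨by omega, r, hrC, ?_⟩
    set C := compIn G A x with hC
    have hCr : C = compIn G A r := compIn_eq_of_mem hrC
    apply ih
    intro y hy
    have hyC : y ∈ C := hy.1
    have hyr : y ≠ r := hy.2
    have hry : reachIn G A r y := by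
      have : y ∈ compIn G A r := hCr ▸ hyC
      exact this.2
    obtain ⟨r', hadj, hr'A, hr'r, hreach⟩ := exists_first_step hry hyr
    rw [← hCr] at hreach
    have hr'C : r' ∈ C := by
      rw [hCr]
      exact ⟨hr'A, Relation.ReflTransGen.single ⟨hrC.1, hr'A, hadj⟩⟩
    refine ⟨r', ⟨⟨hr'C, by simpa using hr'r⟩, reachIn_symm hreach⟩, ?_⟩
    intro z p hp hsupp
    have hrnot : r ∉ p.support := fun hmem => by simpa using (hsupp r hmem).2
    have hq : (SimpleGraph.Walk.cons hadj p).IsPath := by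
      rw [SimpleGraph.Walk.cons_isPath_iff]
      exact ⟨hp, hrnot⟩
    have hqsupp : ∀ w ∈ (SimpleGraph.Walk.cons hadj p).support, w ∈ A := by
      intro w hw
      rw [SimpleGraph.Walk.support_cons, List.mem_cons] at hw
      rcases hw with rfl | hw
      · exact hrC.1
      · exact ((hsupp w hw).1 : w ∈ C).1
    have := hbound z _ hq hqsupp
    rw [SimpleGraph.Walk.length_cons] at this
    omega

end Aux

/-- a finite simple graph all of whose paths have length at most `n`
has type at most `n + 2`. -/
theorem stmt_13 {V : Type*} [Fintype V] (G : SimpleGraph V) (n : ℕ)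
    (hpath : ∀ u v : V, ∀ p : G.Walk u v, p.IsPath → p.length ≤ n) :
    TypeAtMost G (n + 2) Set.univ := by
  have h := typeAtMost_of_rooted_bound (G := G) (n + 1) Set.univ ?_
  · exact h
  · intro x _
    exact ⟨x, ⟨trivial, Relation.ReflTransGen.refl⟩,
      fun z p hp _ => (hpath x z p hp).trans (by omega)⟩
end

section
/- Let S be a set with a quasi-order ≤, a transition relation ⇒, and a downward-closed subset Q ⊆ S on which ≤ is a well-quasi-order. Let pb : S → Set S satisfy: pb(q) is finite and pb(q) ⊆ Q for every q ∈ S. Let F ⊆ Q be finite and define I₀ = F, I_{n+1} = I_n ∪ ⋃_{q ∈ I_n} pb(q). Then there exists m ∈ ℕ with ↑(I_m) ∩ Q = ↑(I_{m+1}) ∩ Q, i.e., the increasing sequence of sets ↑(I_n) ∩ Q is guaranteed to become stationary. -/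
/-- if `le` is a wqo on the downward-closed set `Q`, the basis function `pb`
produces finite subsets of `Q` and `F ⊆ Q` is finite, then the increasing sequence of sets
`↑(I n) ∩ Q` becomes stationary. -/
theorem stmt_15 {S : Type*} (le step : S → S → Prop)
    (hrefl : ∀ x, le x x)
    (htrans : ∀ a b c, le a b → le b c → le a c)
    (Q : Set S)
    (hdc : ∀ x y, le x y → y ∈ Q → x ∈ Q)
    (hwqoQ : ∀ f : ℕ → S, (∀ n, f n ∈ Q) → ∃ i j : ℕ, i < j ∧ le (f i) (f j))
    (pb : S → Set S)
    (hpbfin : ∀ q : S, (pb q).Finite)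
    (hpbQ : ∀ q : S, pb q ⊆ Q)
    (F : Set S) (hFfin : F.Finite) (hFQ : F ⊆ Q)
    (I : ℕ → Set S)
    (hI0 : I 0 = F)
    (hIs : ∀ n, I (n + 1) = I n ∪ ⋃ q ∈ I n, pb q) :
    ∃ m : ℕ, upcl le (I m) ∩ Q = upcl le (I (m + 1)) ∩ Q := by
  by_contra h
  push_neg at h
  have hmonos : ∀ n, I n ⊆ I (n + 1) := fun n => by
    rw [hIs n]; exact Set.subset_union_left
  have hmono : Monotone I := monotone_nat_of_le_succ hmonos
  have key : ∀ n, ∃ x, x ∈ upcl le (I (n + 1)) ∧ x ∈ Q ∧ x ∉ upcl le (I n) := by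
    intro n
    have hsub : upcl le (I n) ∩ Q ⊆ upcl le (I (n + 1)) ∩ Q := by
      rintro x ⟨⟨y, hy, hle⟩, hxQ⟩
      exact ⟨⟨y, hmonos n hy, hle⟩, hxQ⟩
    obtain ⟨x, hx1, hx2⟩ := Set.exists_of_ssubset (hsub.ssubset_of_ne (h n))
    exact ⟨x, hx1.1, hx1.2, fun hx => hx2 ⟨hx, hx1.2⟩⟩
  choose f hf1 hf2 hf3 using key
  obtain ⟨i, j, hij, hle⟩ := hwqoQ f hf2
  obtain ⟨y, hy, hley⟩ := hf1 i
  exact hf3 j ⟨y, hmono (Nat.succ_le_of_lt hij) hy, htrans _ _ _ hley hle⟩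
end
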